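/- arXiv:1909.10203 — 3 statements merged into one kernel-verified Lean document; each statement's English description precedes it below -/
import Mathlib

section
/- Let n ≥ 1 and let μ be a Nevanlinna measure on ℝⁿ. Then μ satisfies: for all z ∈ ℂ⁺ⁿ, the sum over all vectors ρ ∈ {−1,0,1}ⁿ with ρ ≠ 0 and no entry equal to 1 of ∫_{ℝⁿ} N_{ρ₁,1}N_{ρ₂,2}⋯N_{ρₙ,n} dμ(t) equals 0, if and only if μ satisfies: for all z ∈ ℂ⁺ⁿ and for every individual vector ρ ∈ {−1,0,1}ⁿ with ρ ≠ 0 and no entry equal to 1, ∫_{ℝⁿ} N_{ρ₁,1}N_{ρ₂,2}⋯N_{ρₙ,n} dμ(t) = 0. -/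
open MeasureTheory Complex Finset Real

noncomputable section

/-- A positive Borel measure `μ` on `ℝⁿ` satisfies the growth condition if
`∫ ∏ (1+tℓ²)⁻¹ dμ < ∞`. -/
def GrowthCond (n : ℕ) (μ : Measure (Fin n → ℝ)) : Prop :=
  ∫⁻ t, ENNReal.ofReal (∏ ℓ, (1 + t ℓ ^ 2)⁻¹) ∂μ < ⊤

/-- The Nevanlinna condition. -/
def NevanCond (n : ℕ) (μ : Measure (Fin n → ℝ)) : Prop :=
  ∀ z : Fin n → ℂ, (∀ j, 0 < (z j).im) → ∀ l₁ l₂ : Fin n, l₁ < l₂ →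
    ∫ t : Fin n → ℝ,
      (((t l₁ : ℂ) - z l₁) ^ 2)⁻¹ * (((t l₂ : ℂ) - (starRingEnd ℂ) (z l₂)) ^ 2)⁻¹ *
        ∏ j ∈ univ \ {l₁, l₂},
          (((t j : ℂ) - z j)⁻¹ - ((t j : ℂ) - (starRingEnd ℂ) (z j))⁻¹) ∂μ = 0

/-- A Nevanlinna measure: a positive Borel measure on `ℝⁿ` satisfying the growth
condition and the Nevanlinna condition. -/
def IsNevanlinnaMeasure (n : ℕ) (μ : Measure (Fin n → ℝ)) : Prop :=
  GrowthCond n μ ∧ NevanCond n μ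

/-- The factors `N_{ρ,j}` (for `ρ ∈ {-1,0,1}`). -/
def Nfac (ρ : ℤ) (z : ℂ) (t : ℝ) : ℂ :=
  if ρ = -1 then (2 * I)⁻¹ * (((t : ℂ) - z)⁻¹ - ((t : ℂ) - I)⁻¹)
  else if ρ = 0 then (2 * I)⁻¹ * (((t : ℂ) - I)⁻¹ - ((t : ℂ) + I)⁻¹)
  else (2 * I)⁻¹ * (((t : ℂ) + I)⁻¹ - ((t : ℂ) - (starRingEnd ℂ) z)⁻¹)

/-- The set of index-vectors `ρ ∈ {-1,0,1}ⁿ`. -/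
def rhoSet (n : ℕ) : Finset (Fin n → ℤ) :=
  Fintype.piFinset fun _ => ({-1, 0, 1} : Finset ℤ)

/-- `μ = c • λ_{ℝⁿ}` for some constant `c ≥ 0`. -/
def IsLebesgueMultiple (n : ℕ) (μ : Measure (Fin n → ℝ)) : Prop :=
  ∃ c : ℝ, 0 ≤ c ∧ μ = ENNReal.ofReal c • (volume : Measure (Fin n → ℝ))

lemma Nfac_neg_one_I (t : ℝ) : Nfac (-1) I t = 0 := by
  simp [Nfac]

lemma Nfac_zero_indep (z z' : ℂ) (t : ℝ) : Nfac 0 z t = Nfac 0 z' t := by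
  simp [Nfac]

lemma rho_vals {n : ℕ} {ρ : Fin n → ℤ}
    (hρ : ρ ∈ (rhoSet n).filter (fun ρ => ρ ≠ 0 ∧ ∀ j, ρ j ≠ 1)) (j : Fin n) :
    ρ j = -1 ∨ ρ j = 0 := by
  simp only [rhoSet, Finset.mem_filter, Fintype.mem_piFinset] at hρ
  have := hρ.1 j
  have h1 := hρ.2.2 j
  simp only [Finset.mem_insert, Finset.mem_singleton] at this
  tauto

lemma key_aux (n : ℕ) (μ : Measure (Fin n → ℝ))
    (H : ∀ z : Fin n → ℂ, (∀ j, 0 < (z j).im) →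
        ∑ ρ ∈ (rhoSet n).filter (fun ρ => ρ ≠ 0 ∧ ∀ j, ρ j ≠ 1),
          ∫ t : Fin n → ℝ, ∏ j, Nfac (ρ j) (z j) (t j) ∂μ = 0) :
    ∀ k : ℕ, ∀ ρ ∈ (rhoSet n).filter (fun ρ => ρ ≠ 0 ∧ ∀ j, ρ j ≠ 1),
      (univ.filter (fun j => ρ j = -1)).card ≤ k →
      ∀ z : Fin n → ℂ, (∀ j, 0 < (z j).im) →
        ∫ t : Fin n → ℝ, ∏ j, Nfac (ρ j) (z j) (t j) ∂μ = 0 := by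
  intro k
  induction k with
  | zero =>
    intro ρ hρ hcard z hz
    exfalso
    have hvals := fun j => rho_vals hρ j
    have hne : ρ ≠ 0 := by
      simp only [Finset.mem_filter] at hρ; exact hρ.2.1
    apply hne
    funext j
    have hj : j ∉ univ.filter (fun j => ρ j = -1) := by
      intro hmem
      have : 0 < (univ.filter (fun j => ρ j = -1)).card :=
        Finset.card_pos.mpr ⟨j, hmem⟩
      omega
    simp only [Finset.mem_filter, Finset.mem_univ, true_and] at hj
    rcases hvals j with h | h
    · exact absurd h hj
    · exact h
  | succ k ih =>
    intro ρ hρ hcard z hz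
    have hvals := fun j => rho_vals hρ j
    set z' : Fin n → ℂ := fun j => if ρ j = -1 then z j else I with hz'def
    have hz' : ∀ j, 0 < (z' j).im := by
      intro j
      by_cases h : ρ j = -1 <;> simp [z', h, hz j]
    have hsum := H z' hz'
    have hone : ∀ ρ' ∈ (rhoSet n).filter (fun ρ => ρ ≠ 0 ∧ ∀ j, ρ j ≠ 1), ρ' ≠ ρ →
        ∫ t : Fin n → ℝ, ∏ j, Nfac (ρ' j) (z' j) (t j) ∂μ = 0 := by
      intro ρ' hρ' hne'
      have hvals' := fun j => rho_vals hρ' j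
      by_cases hsub : ∀ j, ρ' j = -1 → ρ j = -1
      · -- strict subset of supports: use ih
        have hss : univ.filter (fun j => ρ' j = -1) ⊂ univ.filter (fun j => ρ j = -1) := by
          constructor
          · intro j hj
            simp only [Finset.mem_filter, Finset.mem_univ, true_and] at hj ⊢
            exact hsub j hj
          · intro hle
            apply hne'
            funext j
            rcases hvals' j with h | h
            · rw [h, (hsub j h)]
            · rcases hvals j with h2 | h2
              · have : j ∈ univ.filter (fun j => ρ' j = -1) := hle (by simp [h2])
                simp only [Finset.mem_filter, Finset.mem_univ, true_and] at this
                omega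
              · omega
        have : (univ.filter (fun j => ρ' j = -1)).card ≤ k := by
          have := Finset.card_lt_card hss
          omega
        exact ih ρ' hρ' this z' hz'
      · push_neg at hsub
        obtain ⟨j, hj1, hj2⟩ := hsub
        have hzero : ∀ t : Fin n → ℝ, ∏ i, Nfac (ρ' i) (z' i) (t i) = 0 := by
          intro t
          apply Finset.prod_eq_zero (Finset.mem_univ j)
          have : z' j = I := by simp [z', hj2]
          rw [this, hj1, Nfac_neg_one_I]
        simp only [hzero, integral_zero]
    rw [Finset.sum_eq_single_of_mem ρ hρ hone] at hsum
    rw [show (∫ t : Fin n → ℝ, ∏ j, Nfac (ρ j) (z j) (t j) ∂μ) =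
        ∫ t : Fin n → ℝ, ∏ j, Nfac (ρ j) (z' j) (t j) ∂μ from ?_]
    · exact hsum
    · congr 1
      funext t
      apply Finset.prod_congr rfl
      intro j _
      rcases hvals j with h | h
      · have : z' j = z j := by simp [z', h]
        rw [this]
      · rw [h]; exact Nfac_zero_indep _ _ _

/-- Corollary 3.8: for a Nevanlinna measure, the summed condition (3.2) holds iff
each individual term vanishes. -/
theorem condition_a_iff_condition_b (n : ℕ) (hn : 1 ≤ n) (μ : Measure (Fin n → ℝ))
    (hμ : IsNevanlinnaMeasure n μ) :
    (∀ z : Fin n → ℂ, (∀ j, 0 < (z j).im) →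
        ∑ ρ ∈ (rhoSet n).filter (fun ρ => ρ ≠ 0 ∧ ∀ j, ρ j ≠ 1),
          ∫ t : Fin n → ℝ, ∏ j, Nfac (ρ j) (z j) (t j) ∂μ = 0) ↔
      (∀ z : Fin n → ℂ, (∀ j, 0 < (z j).im) →
        ∀ ρ ∈ (rhoSet n).filter (fun ρ => ρ ≠ 0 ∧ ∀ j, ρ j ≠ 1),
          ∫ t : Fin n → ℝ, ∏ j, Nfac (ρ j) (z j) (t j) ∂μ = 0) := by
  constructor
  · intro H z hz ρ hρ
    exact key_aux n μ H (univ.filter (fun j => ρ j = -1)).card ρ hρ le_rfl z hz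
  · intro h z hz
    exact Finset.sum_eq_zero fun ρ hρ => h z hz ρ hρ
end
end

section
/- Let n ≥ 1, let a ∈ ℝ, b ∈ [0,∞)ⁿ, and let μ be a positive Borel measure on ℝⁿ satisfying the growth condition. Define q_sym on (ℂ∖ℝ)ⁿ by q_sym(z) = a + Σ_{ℓ=1}^n b_ℓ z_ℓ + π⁻ⁿ ∫_{ℝⁿ} K_n(z,t) dμ(t). Then for every multi-index k ∈ (ℕ₀)ⁿ with |k| := k₁+⋯+kₙ ≥ 1 and every z ∈ (ℂ∖ℝ)ⁿ, the iterated partial derivative ∂^{|k|} q_sym / ∂z₁^{k₁}∂z₂^{k₂}⋯∂zₙ^{kₙ} exists at z and equals (b_ℓ if |k| = 1 and k_ℓ = 1, and 0 otherwise) + π⁻ⁿ ∫_{ℝⁿ} (2i)^{−(n−1)} ∏_{ℓ : k_ℓ = 0} ((t_ℓ−z_ℓ)⁻¹ − (t_ℓ+i)⁻¹) · ∏_{ℓ : k_ℓ > 0} k_ℓ!·(t_ℓ−z_ℓ)^{−(k_ℓ+1)} dμ(t); in particular the derivative may be taken under the integral sign. -/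
open MeasureTheory Complex Finset Real

noncomputable section

/-- The kernel `K_n`. -/
def Kkernel (n : ℕ) (z : Fin n → ℂ) (t : Fin n → ℝ) : ℂ :=
  I * (2 * ((2 * I) ^ n)⁻¹ * ∏ ℓ, (((t ℓ : ℂ) - z ℓ)⁻¹ - ((t ℓ : ℂ) + I)⁻¹) -
    ((2 * I) ^ n)⁻¹ * ∏ ℓ, (((t ℓ : ℂ) - I)⁻¹ - ((t ℓ : ℂ) + I)⁻¹))

/-- The partial derivative of a function of `n` complex variables with respect to the
`j`-th variable. -/
def pd (n : ℕ) (j : Fin n) (f : (Fin n → ℂ) → ℂ) : (Fin n → ℂ) → ℂ :=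
  fun z => deriv (fun w => f (Function.update z j w)) (z j)

/-- The iterated partial derivative `∂^{|k|}/∂z₁^{k₁}⋯∂zₙ^{kₙ}`. -/
def iterPD (n : ℕ) (k : Fin n → ℕ) (f : (Fin n → ℂ) → ℂ) : (Fin n → ℂ) → ℂ :=
  (List.finRange n).foldr (fun j g => (pd n j)^[k j] g) f

open Topology

namespace DF

def g (m : ℕ) (z : ℂ) (t : ℝ) : ℂ :=
  if m = 0 then ((t:ℂ) - z)⁻¹ - ((t:ℂ) + I)⁻¹
  else (m.factorial : ℂ) * ((t:ℂ) - z) ^ (-(m:ℤ) - 1)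

def Cc (R δ : ℝ) : ℝ := 2 + (2*R^2+1)/δ^2

def Gb (m : ℕ) (R δ : ℝ) : ℝ :=
  if m = 0 then (2*R+1) * Real.sqrt (Cc R δ) else (m.factorial : ℝ) * δ⁻¹^(m-1) * Cc R δ

lemma tsub_ne {t : ℝ} {z : ℂ} (h : z.im ≠ 0) : (t:ℂ) - z ≠ 0 := by
  intro H
  apply h
  have := congrArg Complex.im H
  simpa using this.symm

lemma taddI_ne (t : ℝ) : (t:ℂ) + I ≠ 0 := by
  intro H
  have := congrArg Complex.im H
  simp at this

lemma tsubI_ne (t : ℝ) : (t:ℂ) - I ≠ 0 := by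
  intro H
  have := congrArg Complex.im H
  simp at this

lemma cont_g (m : ℕ) {z : ℂ} (h : z.im ≠ 0) : Continuous (fun t : ℝ => g m z t) := by
  unfold g
  rcases Nat.eq_zero_or_pos m with hm | hm
  · simp only [hm, if_pos rfl]
    exact ((Complex.continuous_ofReal.sub continuous_const).inv₀
        (fun t => tsub_ne h)).sub
      ((Complex.continuous_ofReal.add continuous_const).inv₀ (fun t => taddI_ne t))
  · simp only [Nat.pos_iff_ne_zero.mp hm, if_false]
    exact continuous_const.mul
      ((Complex.continuous_ofReal.sub continuous_const).zpow₀ _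
        (fun t => Or.inl (tsub_ne h)))

lemma g_hasDeriv (m : ℕ) (w : ℂ) (t : ℝ) (h : (t:ℂ) - w ≠ 0) :
    HasDerivAt (fun w => g m w t) (g (m+1) w t) w := by
  unfold g
  rcases Nat.eq_zero_or_pos m with hm | hm
  · subst hm
    simp only [if_pos rfl, Nat.factorial_one, Nat.cast_one, one_mul]
    have h1 : HasDerivAt (fun w : ℂ => (t:ℂ) - w) (-1) w := by
      simpa using (hasDerivAt_id w).const_sub (t:ℂ)
    have h2 := (h1.inv h).sub_const ((t:ℂ) + I)⁻¹
    refine h2.congr_deriv ?_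
    rw [if_neg (by norm_num : ¬((0:ℕ)+1 = 0))]
    rw [show (-(((0:ℕ)+1 : ℕ) : ℤ) - 1) = -(2:ℕ) by norm_num, zpow_neg, zpow_natCast]
    norm_num
  · obtain ⟨m', rfl⟩ := Nat.exists_eq_succ_of_ne_zero (Nat.pos_iff_ne_zero.mp hm)
    simp only [Nat.succ_ne_zero, if_false]
    have h1 : HasDerivAt (fun w : ℂ => (t:ℂ) - w) (-1) w := by
      simpa using (hasDerivAt_id w).const_sub (t:ℂ)
    have hz := hasDerivAt_zpow (-(m'+1:ℕ) - 1 : ℤ) ((t:ℂ) - w) (Or.inl h)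
    have h2 := (hz.comp w h1).const_mul (((m'+1).factorial : ℕ) : ℂ)
    refine h2.congr_deriv ?_
    simp only [Nat.succ_eq_add_one, g, if_neg (by omega : ¬(m' + 1 + 1 = 0))]
    rw [show (-((m'+1+1:ℕ):ℤ) - 1) = (-((m'+1:ℕ):ℤ) - 1 - 1) by push_cast; ring,
      Nat.factorial_succ (m'+1)]
    push_cast
    ring


lemma Cc_pos {R δ : ℝ} (hδ : 0 < δ) (hR : 0 ≤ R) : 0 < Cc R δ := by
  unfold Cc; positivity

lemma Gb_nonneg {m : ℕ} {R δ : ℝ} (hδ : 0 < δ) (hR : 0 ≤ R) : 0 ≤ Gb m R δ := by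
  unfold Gb
  split
  · positivity
  · have := (Cc_pos hδ hR).le
    positivity

lemma normsq_sub (w : ℂ) (t : ℝ) : ‖(t:ℂ) - w‖^2 = (t - w.re)^2 + w.im^2 := by
  rw [Complex.sq_norm, Complex.normSq_apply, Complex.sub_re,
    Complex.sub_im, Complex.ofReal_re, Complex.ofReal_im]
  ring

lemma key_ineq {R δ : ℝ} (hδ : 0 < δ) {w : ℂ} (h1 : |w.re| ≤ R) (h3 : δ ≤ |w.im|) (t : ℝ) :
    1 + t^2 ≤ Cc R δ * ‖(t:ℂ) - w‖^2 := by
  rw [normsq_sub]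
  unfold Cc
  have hδ2 : (0:ℝ) < δ^2 := by positivity
  have him : δ^2 ≤ w.im^2 := by
    rw [← _root_.sq_abs w.im]
    exact pow_le_pow_left₀ hδ.le h3 2
  have hre : w.re^2 ≤ R^2 := by
    rw [← _root_.sq_abs w.re]
    exact pow_le_pow_left₀ (abs_nonneg _) h1 2
  set D := (2*R^2+1)/δ^2 with hD
  have hDpos : 0 < D := by
    apply div_pos (by positivity) hδ2
  have hDd : D * δ^2 = 2*R^2+1 := by
    rw [hD, div_mul_cancel₀ _ hδ2.ne']
  nlinarith [sq_nonneg (t - 2*w.re), sq_nonneg (t - w.re), mul_nonneg hDpos.le (sub_nonneg.mpr him)]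

lemma norm_sub_pos {δ : ℝ} (hδ : 0 < δ) {w : ℂ} (h3 : δ ≤ |w.im|) (t : ℝ) :
    δ ≤ ‖(t:ℂ) - w‖ := by
  refine h3.trans ?_
  have : |((t:ℂ) - w).im| ≤ ‖(t:ℂ) - w‖ := Complex.abs_im_le_norm _
  simpa using this

lemma g_bound (m : ℕ) {R δ : ℝ} (hδ : 0 < δ) (hR : 0 ≤ R) {w : ℂ}
    (h1 : |w.re| ≤ R) (h2 : |w.im| ≤ R) (h3 : δ ≤ |w.im|) (t : ℝ) :
    ‖g m w t‖ ≤ Gb m R δ * (1 + t^2)⁻¹ := by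
  have ht : (0:ℝ) < 1 + t^2 := by positivity
  have hS : δ ≤ ‖(t:ℂ) - w‖ := norm_sub_pos hδ h3 t
  have hS0 : (0:ℝ) < ‖(t:ℂ) - w‖ := lt_of_lt_of_le hδ hS
  have hC : 0 < Cc R δ := Cc_pos hδ hR
  have hS2 : (0:ℝ) < ‖(t:ℂ)-w‖^2 := by positivity
  have hSinv : (‖(t:ℂ) - w‖^2)⁻¹ ≤ Cc R δ * (1 + t^2)⁻¹ := by
    rw [show Cc R δ * (1+t^2)⁻¹ = Cc R δ / (1+t^2) by ring, le_div_iff₀ ht,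
      show (‖(t:ℂ)-w‖^2)⁻¹ * (1+t^2) = (1+t^2) / ‖(t:ℂ)-w‖^2 by ring, div_le_iff₀ hS2]
    exact key_ineq hδ h1 h3 t
  rcases Nat.eq_zero_or_pos m with hm | hm
  · subst hm
    have hne : (t:ℂ) - w ≠ 0 := by rw [← norm_pos_iff]; exact hS0
    have hid : g 0 w t = (w + I) * (((t:ℂ)-w)⁻¹ * ((t:ℂ)+I)⁻¹) := by
      unfold g
      rw [if_pos rfl, inv_sub_inv hne (taddI_ne t),
        show ((t:ℂ)+I) - ((t:ℂ)-w) = w + I by ring, div_eq_mul_inv, mul_inv]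
    have hnormI : ‖(t:ℂ)+I‖^2 = 1 + t^2 := by
      rw [Complex.sq_norm, Complex.normSq_apply]
      simp
      ring
    have hwI : ‖w + I‖ ≤ 2*R+1 := by
      refine (Complex.norm_le_abs_re_add_abs_im _).trans ?_
      simp only [Complex.add_re, Complex.add_im, Complex.I_re, Complex.I_im, add_zero]
      have h4 : |w.im + 1| ≤ |w.im| + 1 := by
        calc |w.im + 1| ≤ |w.im| + |(1:ℝ)| := abs_add_le _ _
        _ = |w.im| + 1 := by norm_num
      linarith
    have hfrac : ‖(t:ℂ)-w‖⁻¹ * ‖(t:ℂ)+I‖⁻¹ ≤ Real.sqrt (Cc R δ) * (1+t^2)⁻¹ := by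
      have hL : (0:ℝ) ≤ ‖(t:ℂ)-w‖⁻¹ * ‖(t:ℂ)+I‖⁻¹ := by positivity
      have hR' : (0:ℝ) ≤ Real.sqrt (Cc R δ) * (1+t^2)⁻¹ := by positivity
      refine (pow_le_pow_iff_left₀ hL hR' (two_ne_zero)).mp ?_
      rw [mul_pow, mul_pow, Real.sq_sqrt hC.le, inv_pow, inv_pow, hnormI]
      calc (‖(t:ℂ)-w‖^2)⁻¹ * (1+t^2)⁻¹ ≤ (Cc R δ * (1+t^2)⁻¹) * (1+t^2)⁻¹ := by
            gcongr
      _ = Cc R δ * ((1+t^2)⁻¹)^2 := by ring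
    rw [hid, norm_mul, norm_mul, norm_inv, norm_inv]
    unfold Gb
    rw [if_pos rfl, mul_assoc]
    exact mul_le_mul hwI hfrac (by positivity) (by linarith)
  · obtain ⟨m', rfl⟩ := Nat.exists_eq_succ_of_ne_zero (Nat.pos_iff_ne_zero.mp hm)
    have hgn : ‖g (m'+1) w t‖ = (((m'+1).factorial : ℝ)) * (‖(t:ℂ)-w‖^(m'+2))⁻¹ := by
      unfold g
      rw [if_neg m'.succ_ne_zero, norm_mul, norm_zpow]
      rw [show (-((m'+1:ℕ):ℤ) - 1) = -((m'+2:ℕ):ℤ) by push_cast; ring, zpow_neg, zpow_natCast]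
      simp
    rw [hgn]
    rw [show Gb (m'+1) R δ = ((m'+1).factorial : ℝ) * δ⁻¹^m' * Cc R δ from by
      unfold Gb; rw [if_neg m'.succ_ne_zero]; simp]
    have h5 : (‖(t:ℂ)-w‖^(m'+2))⁻¹ = (‖(t:ℂ)-w‖^m')⁻¹ * (‖(t:ℂ)-w‖^2)⁻¹ := by
      rw [← mul_inv]
      congr 1
      rw [← pow_add]
    rw [h5]
    have h6 : (‖(t:ℂ)-w‖^m')⁻¹ ≤ δ⁻¹^m' := by
      rw [inv_pow]
      gcongr
    calc ((m'+1).factorial:ℝ) * ((‖(t:ℂ)-w‖^m')⁻¹ * (‖(t:ℂ)-w‖^2)⁻¹)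
        ≤ ((m'+1).factorial:ℝ) * (δ⁻¹^m' * (Cc R δ * (1+t^2)⁻¹)) := by
          refine mul_le_mul_of_nonneg_left ?_ (by positivity)
          exact mul_le_mul h6 hSinv (by positivity) (by positivity)
    _ = ((m'+1).factorial:ℝ) * δ⁻¹^m' * Cc R δ * (1+t^2)⁻¹ := by ring


def Rc (u : ℂ) : ℝ := |u.re| + 2*|u.im| + 1
def dc (u : ℂ) : ℝ := |u.im|/2

lemma Rc_nonneg (u : ℂ) : 0 ≤ Rc u := by unfold Rc; positivity

lemma dc_pos {u : ℂ} (h : u.im ≠ 0) : 0 < dc u := by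
  unfold dc
  have := abs_pos.mpr h
  linarith

lemma self_cond {u : ℂ} (h : u.im ≠ 0) : |u.re| ≤ Rc u ∧ |u.im| ≤ Rc u ∧ dc u ≤ |u.im| := by
  unfold Rc dc
  have h1 := abs_nonneg u.re
  have h2 := abs_pos.mpr h
  refine ⟨by linarith, by linarith, by linarith⟩

lemma ball_cond {u w : ℂ} (h : u.im ≠ 0) (hw : w ∈ Metric.ball u (dc u)) :
    |w.re| ≤ Rc u ∧ |w.im| ≤ Rc u ∧ dc u ≤ |w.im| := by
  rw [Metric.mem_ball, Complex.dist_eq] at hw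
  have hre : |w.re - u.re| ≤ ‖w - u‖ := by
    have := Complex.abs_re_le_norm (w - u)
    simpa using this
  have him : |w.im - u.im| ≤ ‖w - u‖ := by
    have := Complex.abs_im_le_norm (w - u)
    simpa using this
  have h2 := abs_pos.mpr h
  have e1 : |w.re| ≤ |u.re| + |w.re - u.re| := by
    have := abs_add_le (w.re - u.re) u.re
    simp only [sub_add_cancel] at this
    linarith [this, abs_sub_comm w.re u.re]
  have e2 : |w.im| ≤ |u.im| + |w.im - u.im| := by
    have := abs_add_le (w.im - u.im) u.im
    simp only [sub_add_cancel] at this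
    linarith
  have e3 : |u.im| ≤ |w.im| + |w.im - u.im| := by
    have h5 := abs_sub_abs_le_abs_sub u.im w.im
    have h6 := abs_sub_comm u.im w.im
    linarith
  have h1 := abs_nonneg u.re
  unfold Rc dc at *
  refine ⟨by linarith, by linarith, by linarith⟩

lemma ball_im_ne {u w : ℂ} (h : u.im ≠ 0) (hw : w ∈ Metric.ball u (dc u)) : w.im ≠ 0 := by
  have := (ball_cond h hw).2.2
  have h2 := dc_pos h
  intro h0
  rw [h0] at this
  simp only [abs_zero] at this
  linarith

section Multi

variable {n : ℕ} (μ : Measure (Fin n → ℝ))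

def P (k : Fin n → ℕ) (z : Fin n → ℂ) (t : Fin n → ℝ) : ℂ := ∏ ℓ, g (k ℓ) (z ℓ) (t ℓ)

def Bnd (k : Fin n → ℕ) (z : Fin n → ℂ) (t : Fin n → ℝ) : ℝ :=
  ∏ ℓ, (Gb (k ℓ) (Rc (z ℓ)) (dc (z ℓ)) * (1 + (t ℓ)^2)⁻¹)

lemma cont_P (k : Fin n → ℕ) {z : Fin n → ℂ} (hz : ∀ i, (z i).im ≠ 0) :
    Continuous (fun t : Fin n → ℝ => P k z t) :=
  continuous_finset_prod _ fun ℓ _ => (cont_g _ (hz ℓ)).comp (continuous_apply ℓ)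

lemma P_le_Bnd (k : Fin n → ℕ) {z : Fin n → ℂ} (hz : ∀ i, (z i).im ≠ 0) (t : Fin n → ℝ) :
    ‖P k z t‖ ≤ Bnd k z t := by
  rw [P, norm_prod]
  refine Finset.prod_le_prod (fun ℓ _ => norm_nonneg _) (fun ℓ _ => ?_)
  obtain ⟨c1, c2, c3⟩ := self_cond (hz ℓ)
  exact g_bound _ (dc_pos (hz ℓ)) (Rc_nonneg _) c1 c2 c3 _

lemma P_le_Bnd_ball (k : Fin n → ℕ) {z : Fin n → ℂ} (hz : ∀ i, (z i).im ≠ 0) (j : Fin n)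
    {w : ℂ} (hw : w ∈ Metric.ball (z j) (dc (z j))) (t : Fin n → ℝ) :
    ‖P k (Function.update z j w) t‖ ≤ Bnd k z t := by
  rw [P, norm_prod, Bnd]
  refine Finset.prod_le_prod (fun ℓ _ => norm_nonneg _) (fun ℓ _ => ?_)
  rcases eq_or_ne ℓ j with rfl | hne
  · rw [Function.update_self]
    obtain ⟨c1, c2, c3⟩ := ball_cond (hz ℓ) hw
    exact g_bound _ (dc_pos (hz ℓ)) (Rc_nonneg _) c1 c2 c3 _
  · rw [Function.update_of_ne hne]
    obtain ⟨c1, c2, c3⟩ := self_cond (hz ℓ)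
    exact g_bound _ (dc_pos (hz ℓ)) (Rc_nonneg _) c1 c2 c3 _

lemma integrable_prodInv (hμ : GrowthCond n μ) :
    Integrable (fun t : Fin n → ℝ => ∏ ℓ, (1 + (t ℓ)^2)⁻¹) μ := by
  constructor
  · exact (continuous_finset_prod _ fun ℓ _ =>
      ((continuous_const.add ((continuous_apply ℓ).pow 2)).inv₀
        (fun t => (by positivity : (0:ℝ) < 1 + t ℓ ^ 2).ne'))).aestronglyMeasurable
  · rw [hasFiniteIntegral_def]
    refine lt_of_eq_of_lt ?_ hμ
    refine lintegral_congr fun t => ?_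
    rw [← Real.enorm_eq_ofReal (by positivity)]

lemma integrable_Bnd (hμ : GrowthCond n μ) (k : Fin n → ℕ) (z : Fin n → ℂ) :
    Integrable (Bnd k z) μ := by
  have : Bnd k z = fun t => (∏ ℓ, Gb (k ℓ) (Rc (z ℓ)) (dc (z ℓ))) * ∏ ℓ, (1+(t ℓ)^2)⁻¹ := by
    funext t
    rw [Bnd, Finset.prod_mul_distrib]
  rw [this]
  exact (integrable_prodInv μ hμ).const_mul _

lemma integrable_P (hμ : GrowthCond n μ) (k : Fin n → ℕ) {z : Fin n → ℂ}
    (hz : ∀ i, (z i).im ≠ 0) : Integrable (fun t => P k z t) μ :=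
  (integrable_Bnd μ hμ k z).mono' (cont_P k hz).aestronglyMeasurable
    (ae_of_all _ fun t => P_le_Bnd k hz t)

lemma P_update (k : Fin n → ℕ) (z : Fin n → ℂ) (j : Fin n) (w : ℂ) (t : Fin n → ℝ) :
    P k (Function.update z j w) t =
      g (k j) w (t j) * ∏ ℓ ∈ univ.erase j, g (k ℓ) (z ℓ) (t ℓ) := by
  rw [P, ← Finset.mul_prod_erase univ _ (mem_univ j), Function.update_self]
  congr 1
  refine Finset.prod_congr rfl fun ℓ hℓ => ?_
  rw [Function.update_of_ne (Finset.ne_of_mem_erase hℓ)]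

lemma P_update2 (k : Fin n → ℕ) (m : ℕ) (z : Fin n → ℂ) (j : Fin n) (w : ℂ) (t : Fin n → ℝ) :
    P (Function.update k j m) (Function.update z j w) t =
      g m w (t j) * ∏ ℓ ∈ univ.erase j, g (k ℓ) (z ℓ) (t ℓ) := by
  rw [P_update, Function.update_self]
  congr 1
  refine Finset.prod_congr rfl fun ℓ hℓ => ?_
  rw [Function.update_of_ne (Finset.ne_of_mem_erase hℓ)]

lemma upd_ne {z : Fin n → ℂ} (hz : ∀ i, (z i).im ≠ 0) {w : ℂ} (hw : w.im ≠ 0) (j : Fin n) :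
    ∀ i, ((Function.update z j w) i).im ≠ 0 := by
  intro i
  rcases eq_or_ne i j with rfl | hne
  · rwa [Function.update_self]
  · rw [Function.update_of_ne hne]
    exact hz i

lemma hasDeriv_intP (hμ : GrowthCond n μ) (k : Fin n → ℕ) {z : Fin n → ℂ}
    (hz : ∀ i, (z i).im ≠ 0) (j : Fin n) :
    HasDerivAt (fun w => ∫ t, P k (Function.update z j w) t ∂μ)
      (∫ t, P (Function.update k j (k j + 1)) z t ∂μ) (z j) := by
  have hd := dc_pos (hz j)
  have key := hasDerivAt_integral_of_dominated_loc_of_deriv_le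
    (μ := μ) (x₀ := z j) (s := Metric.ball (z j) (dc (z j)))
    (F := fun w t => P k (Function.update z j w) t)
    (F' := fun w t => P (Function.update k j (k j + 1)) (Function.update z j w) t)
    (bound := Bnd (Function.update k j (k j + 1)) z) (Metric.ball_mem_nhds _ hd) ?_ ?_ ?_ ?_ ?_ ?_
  · have h2 := key.2
    simpa only [Function.update_eq_self] using h2
  · have hop : ∀ᶠ w : ℂ in 𝓝 (z j), w.im ≠ 0 :=
      Complex.continuous_im.continuousAt.eventually_ne (hz j)
    refine hop.mono fun w hw => ?_
    exact (cont_P k (upd_ne hz hw j)).aestronglyMeasurable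
  · simpa only [Function.update_eq_self] using integrable_P μ hμ k hz
  · simpa only [Function.update_eq_self] using
      (cont_P (Function.update k j (k j + 1)) hz).aestronglyMeasurable
  · exact ae_of_all _ fun t w hw => P_le_Bnd_ball _ hz j hw t
  · exact integrable_Bnd μ hμ _ z
  · refine ae_of_all _ fun t w hw => ?_
    have hwim : w.im ≠ 0 := ball_im_ne (hz j) hw
    have hrw : (fun w' => P k (Function.update z j w') t) =
        fun w' => g (k j) w' (t j) * ∏ ℓ ∈ univ.erase j, g (k ℓ) (z ℓ) (t ℓ) := by
      funext w'
      exact P_update k z j w' t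
    rw [hrw]
    show HasDerivAt _ (P (Function.update k j (k j + 1)) (Function.update z j w) t) w
    rw [P_update2]
    exact (g_hasDeriv (k j) w (t j) (tsub_ne hwim)).mul_const _

lemma K_int (hμ : GrowthCond n μ) {z' : Fin n → ℂ} (hz' : ∀ i, (z' i).im ≠ 0) :
    ∫ t, Kkernel n z' t ∂μ =
      (2*I*((2*I)^n)⁻¹) * ∫ t, P (0 : Fin n → ℕ) z' t ∂μ -
      (I*((2*I)^n)⁻¹) * ∫ t, P (0 : Fin n → ℕ) (fun _ => I) t ∂μ := by
  have hI : ∀ i : Fin n, ((fun _ => I : Fin n → ℂ) i).im ≠ 0 := fun i => by simp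
  have hpt : ∀ t, Kkernel n z' t =
      (2*I*((2*I)^n)⁻¹) * P (0 : Fin n → ℕ) z' t - (I*((2*I)^n)⁻¹) * P (0 : Fin n → ℕ) (fun _ => I) t := by
    intro t
    simp [Kkernel, P, g]
    ring
  calc ∫ t, Kkernel n z' t ∂μ
      = ∫ t, ((2*I*((2*I)^n)⁻¹) * P (0 : Fin n → ℕ) z' t
          - (I*((2*I)^n)⁻¹) * P (0 : Fin n → ℕ) (fun _ => I) t) ∂μ := by
        exact integral_congr_ae (ae_of_all _ hpt)
  _ = _ := by
      rw [integral_sub ((integrable_P μ hμ 0 hz').const_mul _)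
        ((integrable_P μ hμ 0 hI).const_mul _), integral_const_mul, integral_const_mul]

end Multi

section Main

variable {n : ℕ} (a : ℝ) (b : Fin n → ℝ) (μ : Measure (Fin n → ℝ))
  (qsym : (Fin n → ℂ) → ℂ)

def Dk (k : Fin n → ℕ) : ℂ := ∑ ℓ, if (∑ j, k j) = 1 ∧ k ℓ = 1 then (b ℓ : ℂ) else 0

def Q (k : Fin n → ℕ) (z : Fin n → ℂ) : ℂ :=
  Dk b k + ((π : ℂ) ^ n)⁻¹ * (((2 * I) ^ (n-1))⁻¹ * ∫ t, P k z t ∂μ)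

def A (k : Fin n → ℕ) : (Fin n → ℂ) → ℂ :=
  if k = 0 then qsym else Q b μ k

lemma sum_update_succ (k : Fin n → ℕ) (j : Fin n) :
    (∑ i, Function.update k j (k j + 1) i) = (∑ i, k i) + 1 := by
  rw [Finset.sum_update_of_mem (mem_univ j)]
  rw [← Finset.sum_erase_add univ k (mem_univ j), Finset.sdiff_singleton_eq_erase]
  omega

lemma update_succ_ne_zero (k : Fin n → ℕ) (j : Fin n) :
    Function.update k j (k j + 1) ≠ 0 := by
  intro h
  have := congrFun h j
  rw [Function.update_self] at this
  simp at this

lemma ne_zero_sum {k : Fin n → ℕ} (h : k ≠ 0) : 1 ≤ ∑ i, k i := by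
  rcases Function.ne_iff.mp h with ⟨j, hj⟩
  have h1 : 1 ≤ k j := by
    have : k j ≠ 0 := by simpa using hj
    omega
  calc 1 ≤ k j := h1
  _ ≤ ∑ i, k i := Finset.single_le_sum (fun i _ => Nat.zero_le _) (mem_univ j)

lemma Dk_e (j : Fin n) : Dk b (Function.update (0 : Fin n → ℕ) j 1) = b j := by
  unfold Dk
  have hs : (∑ i, Function.update (0 : Fin n → ℕ) j 1 i) = 1 := by
    rw [Finset.sum_update_of_mem (mem_univ j)]
    simp
  have hterm : ∀ ℓ : Fin n,
      (if (∑ i, Function.update (0 : Fin n → ℕ) j 1 i) = 1 ∧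
          Function.update (0 : Fin n → ℕ) j 1 ℓ = 1 then (b ℓ : ℂ) else 0) =
      if ℓ = j then (b ℓ : ℂ) else 0 := by
    intro ℓ
    rcases eq_or_ne ℓ j with rfl | hne
    · rw [if_pos ⟨hs, by rw [Function.update_self]⟩, if_pos rfl]
    · rw [if_neg, if_neg hne]
      rintro ⟨-, hc⟩
      rw [Function.update_of_ne hne] at hc
      simp at hc
  rw [Finset.sum_congr rfl fun ℓ _ => hterm ℓ, Finset.sum_ite_eq' univ j (fun ℓ => (b ℓ : ℂ))]
  rw [if_pos (mem_univ j)]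

lemma Dk_big {k : Fin n → ℕ} (h : 2 ≤ ∑ i, k i) : Dk b k = 0 := by
  unfold Dk
  refine Finset.sum_eq_zero fun ℓ _ => ?_
  rw [if_neg]
  rintro ⟨h1, -⟩
  omega

lemma c1_eq (hn : 1 ≤ n) : 2*I*(((2:ℂ)*I)^n)⁻¹ = (((2:ℂ)*I)^(n-1))⁻¹ := by
  obtain ⟨m, rfl⟩ : ∃ m, n = m + 1 := ⟨n - 1, by omega⟩
  have h2I : (2:ℂ)*I ≠ 0 := by
    simp [Complex.ext_iff]
  have hp : ((2:ℂ)*I)^m ≠ 0 := pow_ne_zero _ h2I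
  rw [pow_succ, Nat.add_sub_cancel, mul_inv, ← mul_assoc]
  rw [mul_comm ((2:ℂ)*I) ((((2:ℂ)*I)^m)⁻¹), mul_assoc, mul_inv_cancel₀ h2I, mul_one]

lemma master (hn : 1 ≤ n) (hμ : GrowthCond n μ)
    (hq : ∀ z : Fin n → ℂ, qsym z =
      (a : ℂ) + ∑ ℓ, (b ℓ : ℂ) * z ℓ + ((π : ℂ) ^ n)⁻¹ * ∫ t, Kkernel n z t ∂μ)
    (k : Fin n → ℕ) (j : Fin n) {z : Fin n → ℂ} (hz : ∀ i, (z i).im ≠ 0) :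
    HasDerivAt (fun w => A b μ qsym k (Function.update z j w))
      (A b μ qsym (Function.update k j (k j + 1)) z) (z j) := by
  have hk' := update_succ_ne_zero k j
  rcases eq_or_ne k 0 with rfl | hk0
  · -- k = 0 : use qsym representation
    have hk1 : Function.update (0 : Fin n → ℕ) j 1 ≠ 0 := by
      intro h
      have := congrFun h j
      rw [Function.update_self] at this
      simp at this
    simp only [A, if_pos rfl, Pi.zero_apply, zero_add, if_neg hk1]
    set c1 : ℂ := 2*I*(((2:ℂ)*I)^n)⁻¹ with hc1
    set c2 : ℂ := (I*((2*I)^n)⁻¹) * ∫ t, P (0 : Fin n → ℕ) (fun _ => I) t ∂μ with hc2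
    set C₁ : ℂ := ∑ ℓ ∈ univ.erase j, (b ℓ : ℂ) * z ℓ with hC₁
    have h1 : HasDerivAt (fun w : ℂ => (b j : ℂ) * w) (b j) (z j) := by
      simpa using (hasDerivAt_id (z j)).const_mul (b j : ℂ)
    have h2 := hasDeriv_intP μ hμ (0 : Fin n → ℕ) hz j
    simp only [Pi.zero_apply, zero_add] at h2
    have ha : HasDerivAt (fun w : ℂ => (a : ℂ) + ((b j : ℂ) * w + C₁)) (b j) (z j) :=
      (h1.add_const C₁).const_add (a : ℂ)
    have hb : HasDerivAt
        (fun w : ℂ => ((π : ℂ)^n)⁻¹ *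
          (c1 * ∫ t, P (0 : Fin n → ℕ) (Function.update z j w) t ∂μ - c2))
        (((π : ℂ)^n)⁻¹ * (c1 * ∫ t, P (Function.update (0 : Fin n → ℕ) j 1) z t ∂μ)) (z j) :=
      ((h2.const_mul c1).sub_const c2).const_mul _
    have htot := ha.add hb
    have hev : (fun w => qsym (Function.update z j w)) =ᶠ[𝓝 (z j)]
        (fun w => (a : ℂ) + ((b j : ℂ) * w + C₁) +
          ((π : ℂ)^n)⁻¹ * (c1 * ∫ t, P (0 : Fin n → ℕ) (Function.update z j w) t ∂μ - c2)) := by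
      have hop : ∀ᶠ w : ℂ in 𝓝 (z j), w.im ≠ 0 :=
        Complex.continuous_im.continuousAt.eventually_ne (hz j)
      refine hop.mono fun w hw => ?_
      have hzw := upd_ne hz hw j
      show qsym (Function.update z j w) = _
      rw [hq (Function.update z j w), K_int μ hμ hzw]
      congr 1
      · congr 1
        rw [← Finset.add_sum_erase univ _ (mem_univ j), Function.update_self, hC₁]
        congr 1
        refine Finset.sum_congr rfl fun ℓ hℓ => ?_
        rw [Function.update_of_ne (Finset.ne_of_mem_erase hℓ)]
    have hfinal := htot.congr_of_eventuallyEq hev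
    have hQ : Q b μ (Function.update (0 : Fin n → ℕ) j 1) z =
        (b j : ℂ) + ((π : ℂ)^n)⁻¹ *
          (c1 * ∫ t, P (Function.update (0 : Fin n → ℕ) j 1) z t ∂μ) := by
      unfold Q
      rw [Dk_e, hc1, c1_eq hn]
    rw [hQ]
    exact hfinal
  · -- k ≠ 0
    simp only [A, if_neg hk0, if_neg hk']
    have h2 := hasDeriv_intP μ hμ k hz j
    have hb : HasDerivAt
        (fun w : ℂ => Dk b k + ((π : ℂ)^n)⁻¹ *
          ((((2:ℂ)*I)^(n-1))⁻¹ * ∫ t, P k (Function.update z j w) t ∂μ))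
        (((π : ℂ)^n)⁻¹ * ((((2:ℂ)*I)^(n-1))⁻¹ *
          ∫ t, P (Function.update k j (k j + 1)) z t ∂μ)) (z j) :=
      ((h2.const_mul _).const_mul _).const_add _
    have hval : Q b μ (Function.update k j (k j + 1)) z =
        ((π : ℂ)^n)⁻¹ * ((((2:ℂ)*I)^(n-1))⁻¹ *
          ∫ t, P (Function.update k j (k j + 1)) z t ∂μ) := by
      unfold Q
      rw [Dk_big, zero_add]
      rw [sum_update_succ]
      have := ne_zero_sum hk0
      omega
    rw [hval]
    exact hb
lemma agree_pd (hn : 1 ≤ n) (hμ : GrowthCond n μ)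
    (hq : ∀ z : Fin n → ℂ, qsym z =
      (a : ℂ) + ∑ ℓ, (b ℓ : ℂ) * z ℓ + ((π : ℂ) ^ n)⁻¹ * ∫ t, Kkernel n z t ∂μ)
    (k : Fin n → ℕ) (j : Fin n) (F : (Fin n → ℂ) → ℂ)
    (hF : ∀ z : Fin n → ℂ, (∀ i, (z i).im ≠ 0) → F z = A b μ qsym k z) :
    ∀ z : Fin n → ℂ, (∀ i, (z i).im ≠ 0) →
      pd n j F z = A b μ qsym (Function.update k j (k j + 1)) z := by
  intro z hz
  unfold pd
  have hev : (fun w => F (Function.update z j w)) =ᶠ[𝓝 (z j)]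
      (fun w => A b μ qsym k (Function.update z j w)) := by
    have hop : ∀ᶠ w : ℂ in 𝓝 (z j), w.im ≠ 0 :=
      Complex.continuous_im.continuousAt.eventually_ne (hz j)
    exact hop.mono fun w hw => hF _ (upd_ne hz hw j)
  rw [hev.deriv_eq]
  exact (master a b μ qsym hn hμ hq k j hz).deriv

lemma agree_iter (hn : 1 ≤ n) (hμ : GrowthCond n μ)
    (hq : ∀ z : Fin n → ℂ, qsym z =
      (a : ℂ) + ∑ ℓ, (b ℓ : ℂ) * z ℓ + ((π : ℂ) ^ n)⁻¹ * ∫ t, Kkernel n z t ∂μ)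
    (k : Fin n → ℕ) (j : Fin n) (F : (Fin n → ℂ) → ℂ)
    (hF : ∀ z : Fin n → ℂ, (∀ i, (z i).im ≠ 0) → F z = A b μ qsym k z) :
    ∀ m : ℕ, ∀ z : Fin n → ℂ, (∀ i, (z i).im ≠ 0) →
      ((pd n j)^[m] F) z = A b μ qsym (Function.update k j (k j + m)) z := by
  intro m
  induction m with
  | zero =>
    intro z hz
    simp only [Function.iterate_zero, id_eq, add_zero, Function.update_eq_self]
    exact hF z hz
  | succ m ih =>
    intro z hz
    rw [Function.iterate_succ_apply']
    have hstep := agree_pd a b μ qsym hn hμ hq (Function.update k j (k j + m)) j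
      ((pd n j)^[m] F) ih z hz
    rw [hstep]
    have e : Function.update (Function.update k j (k j + m)) j
        ((Function.update k j (k j + m)) j + 1) = Function.update k j (k j + (m+1)) := by
      rw [Function.update_self, Function.update_idem]
      have : k j + m + 1 = k j + (m + 1) := by omega
      rw [this]
    rw [e]

lemma agree_foldr (hn : 1 ≤ n) (hμ : GrowthCond n μ)
    (hq : ∀ z : Fin n → ℂ, qsym z =
      (a : ℂ) + ∑ ℓ, (b ℓ : ℂ) * z ℓ + ((π : ℂ) ^ n)⁻¹ * ∫ t, Kkernel n z t ∂μ)
    (k : Fin n → ℕ) :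
    ∀ L : List (Fin n), L.Nodup → ∀ z : Fin n → ℂ, (∀ i, (z i).im ≠ 0) →
      (L.foldr (fun j g => (pd n j)^[k j] g) qsym) z =
        A b μ qsym (fun i => if i ∈ L then k i else 0) z := by
  intro L
  induction L with
  | nil =>
    intro _ z hz
    simp only [List.foldr_nil]
    have e : (fun i : Fin n => if i ∈ ([] : List (Fin n)) then k i else 0) = 0 := by
      funext i; simp
    rw [e]
    unfold A
    rw [if_pos rfl]
  | cons j L ih =>
    intro hnd z hz
    have hjL : j ∉ L := (List.nodup_cons.mp hnd).1
    have hLnd := (List.nodup_cons.mp hnd).2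
    simp only [List.foldr_cons]
    have base := ih hLnd
    have hit := agree_iter a b μ qsym hn hμ hq (fun i => if i ∈ L then k i else 0) j _
      base (k j) z hz
    rw [hit]
    have e : Function.update (fun i : Fin n => if i ∈ L then k i else 0) j
        ((fun i : Fin n => if i ∈ L then k i else 0) j + (k j)) =
        fun i : Fin n => if i ∈ j :: L then k i else 0 := by
      funext i
      rcases eq_or_ne i j with rfl | hne
      · rw [Function.update_self]
        simp [hjL]
      · rw [Function.update_of_ne hne]
        simp [hne]
    rw [e]

lemma iterPD_eq (hn : 1 ≤ n) (hμ : GrowthCond n μ)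
    (hq : ∀ z : Fin n → ℂ, qsym z =
      (a : ℂ) + ∑ ℓ, (b ℓ : ℂ) * z ℓ + ((π : ℂ) ^ n)⁻¹ * ∫ t, Kkernel n z t ∂μ)
    (k : Fin n → ℕ) {z : Fin n → ℂ} (hz : ∀ i, (z i).im ≠ 0) :
    iterPD n k qsym z = A b μ qsym k z := by
  unfold iterPD
  have h := agree_foldr a b μ qsym hn hμ hq k (List.finRange n) (List.nodup_finRange n) z hz
  rw [h]
  have e : (fun i : Fin n => if i ∈ List.finRange n then k i else 0) = k := by
    funext i
    simp [List.mem_finRange]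
  rw [e]

end Main

end DF

/-- Proposition 3.13: integral representation of the partial derivatives of the
symmetric extension of a Herglotz-Nevanlinna function; in particular the derivative
may be taken under the integral sign. -/
theorem derivative_formula (n : ℕ) (hn : 1 ≤ n) (a : ℝ) (b : Fin n → ℝ)
    (hb : ∀ ℓ, 0 ≤ b ℓ) (μ : Measure (Fin n → ℝ)) (hμ : GrowthCond n μ)
    (qsym : (Fin n → ℂ) → ℂ)
    (hq : ∀ z : Fin n → ℂ, qsym z =
      (a : ℂ) + ∑ ℓ, (b ℓ : ℂ) * z ℓ + ((π : ℂ) ^ n)⁻¹ * ∫ t, Kkernel n z t ∂μ)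
    (k : Fin n → ℕ) (hk : 1 ≤ ∑ j, k j)
    (z : Fin n → ℂ) (hz : ∀ j, (z j).im ≠ 0) :
    -- the value of the iterated partial derivative
    (iterPD n k qsym z =
      (∑ ℓ, if (∑ j, k j) = 1 ∧ k ℓ = 1 then (b ℓ : ℂ) else 0) +
        ((π : ℂ) ^ n)⁻¹ *
          ∫ t : Fin n → ℝ,
            ((2 * I) ^ (n - 1))⁻¹ *
              (∏ ℓ ∈ univ.filter (fun ℓ => k ℓ = 0),
                (((t ℓ : ℂ) - z ℓ)⁻¹ - ((t ℓ : ℂ) + I)⁻¹)) *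
              ∏ ℓ ∈ univ.filter (fun ℓ => 0 < k ℓ),
                (Nat.factorial (k ℓ) : ℂ) * ((t ℓ : ℂ) - z ℓ) ^ (-(k ℓ : ℤ) - 1) ∂μ) ∧
    -- existence: every partial derivative of every iterated partial derivative of
    -- `qsym` exists at `z`
    (∀ k' : Fin n → ℕ, (∀ j, k' j ≤ k j) → ∀ j : Fin n,
      DifferentiableAt ℂ (fun w => iterPD n k' qsym (Function.update z j w)) (z j)) := by
  have hk0 : k ≠ 0 := by
    intro h
    rw [h] at hk
    simp at hk
  constructor
  · have h1 := DF.iterPD_eq a b μ qsym hn hμ hq k hz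
    rw [h1]
    unfold DF.A
    rw [if_neg hk0]
    unfold DF.Q
    have hint : (∫ t : Fin n → ℝ,
        ((2 * I) ^ (n - 1))⁻¹ *
          (∏ ℓ ∈ univ.filter (fun ℓ => k ℓ = 0),
            (((t ℓ : ℂ) - z ℓ)⁻¹ - ((t ℓ : ℂ) + I)⁻¹)) *
          ∏ ℓ ∈ univ.filter (fun ℓ => 0 < k ℓ),
            (Nat.factorial (k ℓ) : ℂ) * ((t ℓ : ℂ) - z ℓ) ^ (-(k ℓ : ℤ) - 1) ∂μ) =
        (((2 : ℂ) * I) ^ (n-1))⁻¹ * ∫ t, DF.P k z t ∂μ := by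
      rw [← integral_const_mul]
      refine integral_congr_ae (ae_of_all _ fun t => ?_)
      beta_reduce
      rw [mul_assoc]
      congr 1
      rw [DF.P, ← Finset.prod_filter_mul_prod_filter_not univ (fun ℓ => k ℓ = 0)]
      congr 1
      · refine Finset.prod_congr rfl fun ℓ hℓ => ?_
        unfold DF.g
        rw [if_pos (Finset.mem_filter.mp hℓ).2]
      · rw [show (univ.filter fun ℓ : Fin n => 0 < k ℓ) =
            univ.filter (fun ℓ => ¬ k ℓ = 0) from
          Finset.filter_congr fun ℓ _ => by simp [Nat.pos_iff_ne_zero]]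
        refine Finset.prod_congr rfl fun ℓ hℓ => ?_
        unfold DF.g
        rw [if_neg (Finset.mem_filter.mp hℓ).2]
    rw [hint]
    rfl
  · intro k' _ j
    have hF : ∀ z' : Fin n → ℂ, (∀ i, (z' i).im ≠ 0) →
        iterPD n k' qsym z' = DF.A b μ qsym k' z' :=
      fun z' hz' => DF.iterPD_eq a b μ qsym hn hμ hq k' hz'
    have hop : ∀ᶠ w : ℂ in 𝓝 (z j), w.im ≠ 0 :=
      Complex.continuous_im.continuousAt.eventually_ne (hz j)
    have hev : (fun w => iterPD n k' qsym (Function.update z j w)) =ᶠ[𝓝 (z j)]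
        (fun w => DF.A b μ qsym k' (Function.update z j w)) :=
      hop.mono fun w hw => hF _ (DF.upd_ne hz hw j)
    exact ((DF.master a b μ qsym hn hμ hq k' j hz).congr_of_eventuallyEq
      hev).differentiableAt
end
end

section
/- Let n ≥ 1 and let μ be a Nevanlinna measure on ℝⁿ. Then μ satisfies: for every index j ∈ {1,…,n} and all z ∈ ℂ⁺ⁿ, ∫_{ℝⁿ} (t_j−z_j)⁻² ∏_{ℓ≠j} ((t_ℓ−z_ℓ)⁻¹ − (t_ℓ−conj(z_ℓ))⁻¹) dμ(t) = 0, if and only if μ satisfies: for every index j ∈ {1,…,n} and all z ∈ ℂ⁺ⁿ, ∫_{ℝⁿ} (t_j−z_j)⁻² ∏_{ℓ≠j} ((t_ℓ−z_ℓ)⁻¹ − (t_ℓ+i)⁻¹) dμ(t) = 0. -/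
open MeasureTheory Complex Finset Real

noncomputable section

namespace NevanAux


/-- squared Cauchy kernel -/
def sq (a : ℂ) (s : ℝ) : ℂ := (((s : ℂ) - a) ^ 2)⁻¹

/-- difference of Cauchy kernels -/
def cd (a b : ℂ) (s : ℝ) : ℂ := ((s : ℂ) - a)⁻¹ - ((s : ℂ) - b)⁻¹

lemma ofReal_sub_ne (a : ℂ) (ha : a.im ≠ 0) (s : ℝ) : (s : ℂ) - a ≠ 0 := by
  intro h
  apply ha
  have h2 := congrArg Complex.im h
  simpa using h2

lemma cd_anti (a b : ℂ) (s : ℝ) : cd a b s = -cd b a s := by simp only [cd]; ring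

lemma cd_cocycle (a b c : ℂ) (s : ℝ) : cd a c s = cd a b s + cd b c s := by
  simp only [cd]; ring

lemma conj_sq (a : ℂ) (s : ℝ) : (starRingEnd ℂ) (sq a s) = sq ((starRingEnd ℂ) a) s := by
  simp [sq, map_pow]

lemma conj_cd (a b : ℂ) (s : ℝ) :
    (starRingEnd ℂ) (cd a b s) = cd ((starRingEnd ℂ) a) ((starRingEnd ℂ) b) s := by
  simp [cd]

lemma measurable_sq (a : ℂ) : Measurable (sq a) := by
  exact (((Complex.measurable_ofReal.sub measurable_const).pow measurable_const)).inv

lemma measurable_cd (a b : ℂ) : Measurable (cd a b) := by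
  exact ((Complex.measurable_ofReal.sub measurable_const).inv).sub
    ((Complex.measurable_ofReal.sub measurable_const).inv)

lemma continuous_sq (a : ℂ) (ha : a.im ≠ 0) : Continuous (sq a) := by
  apply Continuous.inv₀
  · exact (Complex.continuous_ofReal.sub continuous_const).pow 2
  · intro s; exact pow_ne_zero 2 (ofReal_sub_ne a ha s)

lemma continuous_cd (a b : ℂ) (ha : a.im ≠ 0) (hb : b.im ≠ 0) : Continuous (cd a b) := by
  apply Continuous.sub
  · exact Continuous.inv₀ (Complex.continuous_ofReal.sub continuous_const)
      (fun s => ofReal_sub_ne a ha s)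
  · exact Continuous.inv₀ (Complex.continuous_ofReal.sub continuous_const)
      (fun s => ofReal_sub_ne b hb s)

lemma norm_sq_eq (a : ℂ) (s : ℝ) : ‖sq a s‖ = ((s - a.re) ^ 2 + a.im ^ 2)⁻¹ := by
  rw [sq, norm_inv, norm_pow]
  congr 1
  rw [Complex.sq_norm, Complex.normSq_apply]
  simp [Complex.sub_re, Complex.sub_im]
  ring

/-- The key elementary inequality. -/
lemma key_ineq {x R y v s : ℝ} (hx : x ^ 2 ≤ R ^ 2) (hy : 0 < y) (hyv : y ^ 2 ≤ v) :
    min 1 (y ^ 2) * (1 + s ^ 2) ≤ 2 * (1 + R ^ 2) * ((s - x) ^ 2 + v) := by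
  rcases le_total (y ^ 2) 1 with h | h
  · rw [min_eq_right h]
    nlinarith [sq_nonneg (s - x), sq_nonneg (y * (s - 2 * x)),
      mul_le_mul_of_nonneg_right h (sq_nonneg (s - x)),
      mul_le_mul_of_nonneg_left hx (sq_nonneg y),
      mul_le_mul_of_nonneg_right hyv (sq_nonneg R)]
  · have hv : 1 ≤ v := h.trans hyv
    rw [min_eq_left h]
    nlinarith [sq_nonneg (s - 2 * x), hx, mul_le_mul_of_nonneg_left hv (sq_nonneg R),
      sq_nonneg (s - x)]

lemma sq_bound_aux {a : ℂ} {R y : ℝ} (hR : |a.re| ≤ R) (hy : 0 < y) (hya : y ≤ |a.im|)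
    (s : ℝ) : ‖sq a s‖ ≤ (2 * (1 + R ^ 2) / min 1 (y ^ 2)) * (1 + s ^ 2)⁻¹ := by
  have him : a.im ≠ 0 := by intro h; rw [h] at hya; simp at hya; linarith
  have h1 : (0:ℝ) < (s - a.re) ^ 2 + a.im ^ 2 := by
    have : (0:ℝ) < a.im ^ 2 := by positivity
    positivity
  have hmin : (0:ℝ) < min 1 (y ^ 2) := by positivity
  have hx2 : a.re ^ 2 ≤ R ^ 2 := by
    have := abs_le.mp hR
    nlinarith [this.1, this.2]
  have hy2 : y ^ 2 ≤ a.im ^ 2 := by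
    have h3 : y ≤ |a.im| := hya
    nlinarith [abs_nonneg a.im, _root_.sq_abs a.im]
  have key := key_ineq (x := a.re) (R := R) (y := y) (v := a.im ^ 2) (s := s) hx2 hy hy2
  have h2 : (0:ℝ) < 1 + s ^ 2 := by positivity
  rw [norm_sq_eq]
  have hrw : (2 * (1 + R ^ 2) / min 1 (y ^ 2)) * (1 + s ^ 2)⁻¹
      = (2 * (1 + R ^ 2)) / (min 1 (y ^ 2) * (1 + s ^ 2)) := by
    field_simp
  rw [hrw, inv_eq_one_div, div_le_div_iff₀ h1 (by positivity)]
  nlinarith [key]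





/-- admissible factor: continuous with `C/(1+s²)` decay -/
def Adm (g : ℝ → ℂ) : Prop := Continuous g ∧ ∃ C, ∀ s, ‖g s‖ ≤ C * (1 + s ^ 2)⁻¹

lemma adm_bound {g : ℝ → ℂ} (h : Adm g) : ∃ C, 0 ≤ C ∧ ∀ s, ‖g s‖ ≤ C * (1 + s ^ 2)⁻¹ := by
  obtain ⟨C, hC⟩ := h.2
  refine ⟨max C 0, le_max_right _ _, fun s => (hC s).trans ?_⟩
  exact mul_le_mul_of_nonneg_right (le_max_left _ _) (by positivity)

lemma adm_sq {a : ℂ} (ha : a.im ≠ 0) : Adm (sq a) := by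
  refine ⟨continuous_sq a ha, 2 * (1 + |a.re| ^ 2) / min 1 (|a.im| ^ 2), fun s => ?_⟩
  exact sq_bound_aux le_rfl (abs_pos.mpr ha) le_rfl s

lemma norm_sq_eq_inv_sq (a : ℂ) (s : ℝ) : ‖sq a s‖ = (‖(s : ℂ) - a‖⁻¹) ^ 2 := by
  rw [sq, norm_inv, norm_pow, inv_pow]

lemma norm_cd_le {a b : ℂ} (ha : a.im ≠ 0) (hb : b.im ≠ 0) (s : ℝ) :
    ‖cd a b s‖ ≤ ‖a - b‖ * (‖sq a s‖ + ‖sq b s‖) := by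
  have h1 : cd a b s = (a - b) * (((s : ℂ) - a)⁻¹ * ((s : ℂ) - b)⁻¹) := by
    rw [cd]
    field_simp [ofReal_sub_ne a ha s, ofReal_sub_ne b hb s]
    ring
  rw [h1, norm_mul, norm_mul, norm_inv, norm_inv, norm_sq_eq_inv_sq, norm_sq_eq_inv_sq]
  apply mul_le_mul_of_nonneg_left _ (norm_nonneg _)
  nlinarith [sq_nonneg (‖(s:ℂ) - a‖⁻¹ - ‖(s:ℂ) - b‖⁻¹), inv_nonneg.mpr (norm_nonneg ((s:ℂ)-a)),
    inv_nonneg.mpr (norm_nonneg ((s:ℂ)-b))]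

lemma adm_cd {a b : ℂ} (ha : a.im ≠ 0) (hb : b.im ≠ 0) : Adm (cd a b) := by
  obtain ⟨Ca, hCa0, hCa⟩ := adm_bound (adm_sq ha)
  obtain ⟨Cb, hCb0, hCb⟩ := adm_bound (adm_sq hb)
  refine ⟨continuous_cd a b ha hb, ‖a - b‖ * (Ca + Cb), fun s => ?_⟩
  calc ‖cd a b s‖ ≤ ‖a - b‖ * (‖sq a s‖ + ‖sq b s‖) := norm_cd_le ha hb s
    _ ≤ ‖a - b‖ * ((Ca + Cb) * (1 + s ^ 2)⁻¹) := by
        apply mul_le_mul_of_nonneg_left _ (norm_nonneg _)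
        rw [add_mul]
        exact add_le_add (hCa s) (hCb s)
    _ = ‖a - b‖ * (Ca + Cb) * (1 + s ^ 2)⁻¹ := by ring

variable {n : ℕ} {μ : Measure (Fin n → ℝ)}

lemma integrable_growth (hμ : GrowthCond n μ) :
    Integrable (fun t : Fin n → ℝ => ∏ ℓ, (1 + (t ℓ) ^ 2)⁻¹) μ := by
  constructor
  · apply Continuous.aestronglyMeasurable
    exact continuous_finset_prod _ fun ℓ _ =>
      ((continuous_const.add ((continuous_apply ℓ).pow 2)).inv₀ (fun t => by show (1:ℝ) + t ℓ ^ 2 ≠ 0; positivity))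
  · rw [hasFiniteIntegral_iff_ofReal (ae_of_all _ fun t => by positivity)]
    exact hμ

/-- the main integral functional -/
def Tint (μ : Measure (Fin n → ℝ)) (g : Fin n → ℝ → ℂ) : ℂ := ∫ t, ∏ ℓ, g ℓ (t ℓ) ∂μ

lemma T_integrable (hμ : GrowthCond n μ) (g : Fin n → ℝ → ℂ) (hg : ∀ ℓ, Adm (g ℓ)) :
    Integrable (fun t => ∏ ℓ, g ℓ (t ℓ)) μ := by
  choose C hC0 hC using fun ℓ => adm_bound (hg ℓ)
  refine Integrable.mono' ((integrable_growth hμ).const_mul (∏ ℓ, C ℓ)) ?_ (ae_of_all _ fun t => ?_)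
  · exact (continuous_finset_prod _ fun ℓ _ => (hg ℓ).1.comp (continuous_apply ℓ)).aestronglyMeasurable
  · calc ‖∏ ℓ, g ℓ (t ℓ)‖ ≤ ∏ ℓ, ‖g ℓ (t ℓ)‖ := norm_prod_le _ _
      _ ≤ ∏ ℓ, C ℓ * (1 + (t ℓ) ^ 2)⁻¹ :=
          Finset.prod_le_prod (fun ℓ _ => norm_nonneg _) (fun ℓ _ => hC ℓ (t ℓ))
      _ = (∏ ℓ, C ℓ) * ∏ ℓ, (1 + (t ℓ) ^ 2)⁻¹ := Finset.prod_mul_distrib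

lemma prod_update_eq (g : Fin n → ℝ → ℂ) (m : Fin n) (h : ℝ → ℂ) (t : Fin n → ℝ) :
    ∏ ℓ, Function.update g m h ℓ (t ℓ)
      = h (t m) * ∏ ℓ ∈ univ.erase m, g ℓ (t ℓ) := by
  rw [← Finset.mul_prod_erase univ (fun ℓ => Function.update g m h ℓ (t ℓ)) (mem_univ m)]
  rw [Function.update_self]
  congr 1
  exact Finset.prod_congr rfl fun ℓ hl => by
    rw [Function.update_of_ne (Finset.mem_erase.mp hl).1]





variable {n : ℕ} {μ : Measure (Fin n → ℝ)}



lemma adm_update {g : Fin n → ℝ → ℂ} {m : Fin n} (hg : ∀ ℓ, ℓ ≠ m → Adm (g ℓ))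
    {h : ℝ → ℂ} (hh : Adm h) : ∀ ℓ, Adm (Function.update g m h ℓ) := by
  intro ℓ
  rcases eq_or_ne ℓ m with rfl | e
  · rwa [Function.update_self]
  · rw [Function.update_of_ne e]; exact hg ℓ e

lemma T_update_smul (g : Fin n → ℝ → ℂ) (m : Fin n) (c : ℂ) (h : ℝ → ℂ) :
    Tint μ (Function.update g m (fun s => c * h s))
      = c * Tint μ (Function.update g m h) := by
  unfold Tint
  have hptw : (fun t : Fin n → ℝ => ∏ ℓ, Function.update g m (fun s => c * h s) ℓ (t ℓ))
      = fun t => c • ∏ ℓ, Function.update g m h ℓ (t ℓ) := funext fun t => by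
    rw [prod_update_eq, prod_update_eq, smul_eq_mul]
    ring
  rw [hptw, integral_smul, smul_eq_mul]

lemma T_update_add (hμ : GrowthCond n μ) (g : Fin n → ℝ → ℂ) (m : Fin n)
    (hg : ∀ ℓ, ℓ ≠ m → Adm (g ℓ)) {h₁ h₂ : ℝ → ℂ} (h1 : Adm h₁) (h2 : Adm h₂) :
    Tint μ (Function.update g m (fun s => h₁ s + h₂ s))
      = Tint μ (Function.update g m h₁) + Tint μ (Function.update g m h₂) := by
  unfold Tint
  rw [← integral_add (T_integrable hμ _ (adm_update hg h1)) (T_integrable hμ _ (adm_update hg h2))]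
  congr 1
  funext t
  rw [prod_update_eq, prod_update_eq, prod_update_eq]
  ring

lemma hasDerivAt_cd_fst (b : ℂ) (s : ℝ) {ζ : ℂ} (h : ζ.im ≠ 0) :
    HasDerivAt (fun ζ => cd ζ b s) (sq ζ s) ζ := by
  have h1 : HasDerivAt (fun ζ : ℂ => (s : ℂ) - ζ) (-1) ζ := by
    simpa using (hasDerivAt_id ζ).const_sub (s : ℂ)
  have h2 := (h1.inv (ofReal_sub_ne ζ h s)).sub_const ((s : ℂ) - b)⁻¹
  rw [show sq ζ s = - -1 / ((s : ℂ) - ζ) ^ 2 by rw [sq]; field_simp]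
  exact h2

lemma measurable_T_integrand (g : Fin n → ℝ → ℂ) (hg : ∀ ℓ, Measurable (g ℓ)) :
    AEStronglyMeasurable (fun t : Fin n → ℝ => ∏ ℓ, g ℓ (t ℓ)) μ := by
  apply Measurable.aestronglyMeasurable
  exact Finset.measurable_prod _ fun ℓ _ => (hg ℓ).comp (measurable_pi_apply ℓ)

lemma T_hasDerivAt (hμ : GrowthCond n μ) (g : Fin n → ℝ → ℂ) (m : Fin n)
    (hg : ∀ ℓ, ℓ ≠ m → Adm (g ℓ)) (b : ℂ) (hb : b.im ≠ 0) (ζ₀ : ℂ) (hζ : ζ₀.im ≠ 0) :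
    HasDerivAt (fun ζ => Tint μ (Function.update g m (cd ζ b)))
      (Tint μ (Function.update g m (sq ζ₀))) ζ₀ := by
  have hmg : ∀ ℓ, ℓ ≠ m → Measurable (g ℓ) := fun ℓ hl => (hg ℓ hl).1.measurable
  set ε := |ζ₀.im| / 2 with hεdef
  have hε0 : 0 < ε := div_pos (abs_pos.mpr hζ) two_pos
  have him : ∀ ζ ∈ Metric.ball ζ₀ ε, ε ≤ |ζ.im| := by
    intro ζ hζb
    have hd : dist ζ ζ₀ < ε := Metric.mem_ball.mp hζb
    have h1 : |ζ.im - ζ₀.im| ≤ dist ζ ζ₀ := by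
      rw [Complex.dist_eq]
      simpa [Complex.sub_im] using Complex.abs_im_le_norm (ζ - ζ₀)
    have h2 : |ζ₀.im| - |ζ.im| ≤ |ζ₀.im - ζ.im| := abs_sub_abs_le_abs_sub _ _
    rw [abs_sub_comm] at h2
    have : |ζ₀.im| = 2 * ε := by rw [hεdef]; ring
    linarith
  have himne : ∀ ζ ∈ Metric.ball ζ₀ ε, ζ.im ≠ 0 := by
    intro ζ hζb h0
    have := him ζ hζb
    rw [h0] at this
    simp at this
    linarith
  have hre : ∀ ζ ∈ Metric.ball ζ₀ ε, |ζ.re| ≤ |ζ₀.re| + ε := by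
    intro ζ hζb
    have hd : dist ζ ζ₀ < ε := Metric.mem_ball.mp hζb
    have h1 : |ζ.re - ζ₀.re| ≤ dist ζ ζ₀ := by
      rw [Complex.dist_eq]
      simpa [Complex.sub_re] using Complex.abs_re_le_norm (ζ - ζ₀)
    have := abs_sub_abs_le_abs_sub ζ.re ζ₀.re
    linarith
  -- uniform bound for sq on the ball
  set Bu := 2 * (1 + (|ζ₀.re| + ε) ^ 2) / min 1 (ε ^ 2) with hBu
  have hsqb : ∀ ζ ∈ Metric.ball ζ₀ ε, ∀ s : ℝ, ‖sq ζ s‖ ≤ Bu * (1 + s ^ 2)⁻¹ := by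
    intro ζ hζb s
    exact sq_bound_aux (hre ζ hζb) hε0 (him ζ hζb) s
  -- constants for the other factors
  have hCs : ∀ ℓ, ∃ C, 0 ≤ C ∧ ∀ s, ‖Function.update g m (sq ζ₀) ℓ s‖ ≤ C * (1 + s ^ 2)⁻¹ :=
    fun ℓ => adm_bound (adm_update hg (adm_sq hζ) ℓ)
  choose C hC0 hC using hCs
  have key := hasDerivAt_integral_of_dominated_loc_of_deriv_le (μ := μ)
    (F := fun ζ t => ∏ ℓ, Function.update g m (cd ζ b) ℓ (t ℓ))
    (F' := fun ζ t => ∏ ℓ, Function.update g m (sq ζ) ℓ (t ℓ))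
    (x₀ := ζ₀)
    (bound := fun t => (Bu * ∏ ℓ ∈ univ.erase m, C ℓ) * ∏ ℓ, (1 + (t ℓ) ^ 2)⁻¹)
    (Metric.ball_mem_nhds ζ₀ hε0)
    (Filter.Eventually.of_forall fun ζ => measurable_T_integrand _ (fun ℓ => by
      rcases eq_or_ne ℓ m with rfl | e
      · rw [Function.update_self]; exact measurable_cd _ _
      · rw [Function.update_of_ne e]; exact hmg ℓ e))
    (T_integrable hμ _ (adm_update hg (adm_cd hζ hb)))
    (measurable_T_integrand _ (fun ℓ => by
      rcases eq_or_ne ℓ m with rfl | e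
      · rw [Function.update_self]; exact measurable_sq _
      · rw [Function.update_of_ne e]; exact hmg ℓ e))
    (ae_of_all _ fun t ζ hζb => by
      calc ‖∏ ℓ, Function.update g m (sq ζ) ℓ (t ℓ)‖
          = ‖sq ζ (t m)‖ * ‖∏ ℓ ∈ univ.erase m, g ℓ (t ℓ)‖ := by
            rw [prod_update_eq, norm_mul]
        _ ≤ (Bu * (1 + (t m) ^ 2)⁻¹) * ∏ ℓ ∈ univ.erase m, (C ℓ * (1 + (t ℓ) ^ 2)⁻¹) := by
            apply mul_le_mul (hsqb ζ hζb (t m)) ?_ (norm_nonneg _) (by positivity)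
            calc ‖∏ ℓ ∈ univ.erase m, g ℓ (t ℓ)‖ ≤ ∏ ℓ ∈ univ.erase m, ‖g ℓ (t ℓ)‖ :=
                norm_prod_le _ _
              _ ≤ ∏ ℓ ∈ univ.erase m, (C ℓ * (1 + (t ℓ) ^ 2)⁻¹) := by
                  apply Finset.prod_le_prod (fun ℓ _ => norm_nonneg _)
                  intro ℓ hl
                  have hlm := (Finset.mem_erase.mp hl).1
                  have := hC ℓ (t ℓ)
                  rwa [Function.update_of_ne hlm] at this
        _ = (Bu * ∏ ℓ ∈ univ.erase m, C ℓ)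
              * ((1 + (t m) ^ 2)⁻¹ * ∏ ℓ ∈ univ.erase m, (1 + (t ℓ) ^ 2)⁻¹) := by
            rw [Finset.prod_mul_distrib]; ring
        _ = (Bu * ∏ ℓ ∈ univ.erase m, C ℓ) * ∏ ℓ, (1 + (t ℓ) ^ 2)⁻¹ := by
            rw [Finset.mul_prod_erase univ (fun ℓ => (1 + (t ℓ) ^ 2)⁻¹) (mem_univ m)])
    ((integrable_growth hμ).const_mul _)
    (ae_of_all _ fun t ζ hζb => by
      have hfun : ∀ ζ' : ℂ, (∏ ℓ, Function.update g m (cd ζ' b) ℓ (t ℓ))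
          = cd ζ' b (t m) * ∏ ℓ ∈ univ.erase m, g ℓ (t ℓ) := fun ζ' => prod_update_eq ..
      simp only [hfun]
      rw [prod_update_eq]
      exact (hasDerivAt_cd_fst b (t m) (himne ζ hζb)).mul_const _)
  exact key.2

lemma const_of_deriv_zero {s : Set ℂ} (hconv : Convex ℝ s) (hop : IsOpen s) {f : ℂ → ℂ}
    (hf : ∀ z ∈ s, HasDerivAt f 0 z) {x y : ℂ} (hx : x ∈ s) (hy : y ∈ s) : f x = f y := by
  apply hconv.is_const_of_fderivWithin_eq_zero (𝕜 := ℂ)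
    (fun z hz => ((hf z hz).differentiableAt).differentiableWithinAt) _ hx hy
  intro z hz
  rw [fderivWithin_of_isOpen hop hz, ((hf z hz).hasFDerivAt).fderiv]
  ext x
  simp

lemma deriv_zero_of_conj_eq {u v : ℂ → ℂ} {u' v' : ℂ → ℂ}
    (hu : ∀ z, 0 < z.im → HasDerivAt u (u' z) z)
    (hv : ∀ z, z.im < 0 → HasDerivAt v (v' z) z)
    (huv : ∀ z, 0 < z.im → u z = v ((starRingEnd ℂ) z)) :
    ∀ z, 0 < z.im → u' z = 0 := by
  intro z hz
  have hzc : ((starRingEnd ℂ) z).im < 0 := by simpa using hz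
  have hc : HasFDerivAt (fun w : ℂ => (starRingEnd ℂ) w)
      (Complex.conjCLE.toContinuousLinearMap) z := by
    have := Complex.conjCLE.toContinuousLinearMap.hasFDerivAt (x := z)
    apply this.congr_of_eventuallyEq
    exact Filter.Eventually.of_forall fun w => (Complex.conjCLE_apply w).symm
  have h1 : HasFDerivAt (fun w => v ((starRingEnd ℂ) w))
      ((((1 : ℂ →L[ℂ] ℂ).smulRight (v' ((starRingEnd ℂ) z))).restrictScalars ℝ).comp
        (Complex.conjCLE.toContinuousLinearMap)) z :=
    (((hv _ hzc).hasFDerivAt).restrictScalars ℝ).comp z hc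
  have h2 : HasFDerivAt u (((1 : ℂ →L[ℂ] ℂ).smulRight (u' z)).restrictScalars ℝ) z :=
    ((hu z hz).hasFDerivAt).restrictScalars ℝ
  have heq : u =ᶠ[nhds z] fun w => v ((starRingEnd ℂ) w) := by
    have hmem : {w : ℂ | 0 < w.im} ∈ nhds z :=
      (isOpen_lt continuous_const Complex.continuous_im).mem_nhds hz
    exact Filter.eventuallyEq_of_mem hmem fun w hw => huv w hw
  have h3 := h1.congr_of_eventuallyEq heq
  have h4 := h2.unique h3
  have e1 := congrArg (fun (L : ℂ →L[ℝ] ℂ) => L 1) h4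
  have eI := congrArg (fun (L : ℂ →L[ℝ] ℂ) => L Complex.I) h4
  simp only [ContinuousLinearMap.coe_comp', Function.comp_apply,
    ContinuousLinearMap.coe_restrictScalars', ContinuousLinearMap.smulRight_apply,
    ContinuousLinearMap.one_apply, smul_eq_mul, one_mul,
    ContinuousLinearEquiv.coe_coe, Complex.conjCLE_apply, map_one, Complex.conj_I] at e1 eI
  -- e1 : u' z = v' (conj z), eI : I * u' z = -I * v' (conj z)
  have h6 : (2 : ℂ) * Complex.I * u' z = 0 := by linear_combination eI + Complex.I * e1
  have hI : (2 : ℂ) * Complex.I ≠ 0 := by simp [Complex.I_ne_zero]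
  exact (mul_eq_zero.mp h6).resolve_left hI






variable {n : ℕ} {μ : Measure (Fin n → ℝ)}



/-! ### the concrete factor systems -/

def Gfun (j k : Fin n) (z w : Fin n → ℂ) : Fin n → ℝ → ℂ := fun ℓ =>
  if ℓ = j then sq (z j)
  else if ℓ = k then sq ((starRingEnd ℂ) (w k))
  else cd (z ℓ) ((starRingEnd ℂ) (w ℓ))

def Ffun (j : Fin n) (z w : Fin n → ℂ) : Fin n → ℝ → ℂ := fun ℓ =>
  if ℓ = j then sq (z j) else cd (z ℓ) ((starRingEnd ℂ) (w ℓ))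

def Jint (μ : Measure (Fin n → ℝ)) (j k : Fin n) (z w : Fin n → ℂ) : ℂ := Tint μ (Gfun j k z w)
def Fint (μ : Measure (Fin n → ℝ)) (j : Fin n) (z w : Fin n → ℂ) : ℂ := Tint μ (Ffun j z w)

lemma adm_Gfun {j k : Fin n} {z w : Fin n → ℂ} (hz : ∀ l, 0 < (z l).im)
    (hw : ∀ l, 0 < (w l).im) : ∀ ℓ, Adm (Gfun j k z w ℓ) := by
  intro ℓ
  unfold Gfun
  split
  · exact adm_sq (ne_of_gt (hz j))
  · split
    · exact adm_sq (by simp [Complex.conj_im]; exact ne_of_gt (hw k))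
    · exact adm_cd (ne_of_gt (hz ℓ)) (by simp [Complex.conj_im]; exact ne_of_gt (hw ℓ))

lemma adm_Ffun {j : Fin n} {z w : Fin n → ℂ} (hz : ∀ l, 0 < (z l).im)
    (hw : ∀ l, 0 < (w l).im) : ∀ ℓ, Adm (Ffun j z w ℓ) := by
  intro ℓ
  unfold Ffun
  split
  · exact adm_sq (ne_of_gt (hz j))
  · exact adm_cd (ne_of_gt (hz ℓ)) (by simp [Complex.conj_im]; exact ne_of_gt (hw ℓ))

lemma erase_erase (j k : Fin n) : (univ.erase j).erase k = univ \ {j, k} := by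
  ext ℓ
  simp [Finset.mem_erase, Finset.mem_sdiff, Finset.mem_insert]
  tauto

lemma prod_Gfun (j k : Fin n) (hjk : j ≠ k) (z w : Fin n → ℂ) (t : Fin n → ℝ) :
    ∏ ℓ, Gfun j k z w ℓ (t ℓ)
      = sq (z j) (t j) * sq ((starRingEnd ℂ) (w k)) (t k)
        * ∏ ℓ ∈ univ \ {j, k}, cd (z ℓ) ((starRingEnd ℂ) (w ℓ)) (t ℓ) := by
  have hk : k ∈ univ.erase j := Finset.mem_erase.mpr ⟨Ne.symm hjk, mem_univ k⟩
  rw [← Finset.mul_prod_erase univ (fun ℓ => Gfun j k z w ℓ (t ℓ)) (mem_univ j),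
    ← Finset.mul_prod_erase (univ.erase j) (fun ℓ => Gfun j k z w ℓ (t ℓ)) hk, ← mul_assoc]
  congr 1
  · congr 1
    · simp [Gfun]
    · simp [Gfun, Ne.symm hjk]
  · rw [erase_erase]
    refine Finset.prod_congr rfl fun ℓ hl => ?_
    have h1 : ℓ ≠ j ∧ ℓ ≠ k := by
      have := Finset.mem_sdiff.mp hl
      simp only [Finset.mem_insert, Finset.mem_singleton] at this
      tauto
    simp [Gfun, h1.1, h1.2]

lemma prod_Ffun (j : Fin n) (z w : Fin n → ℂ) (t : Fin n → ℝ) :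
    ∏ ℓ, Ffun j z w ℓ (t ℓ)
      = sq (z j) (t j) * ∏ ℓ ∈ univ \ {j}, cd (z ℓ) ((starRingEnd ℂ) (w ℓ)) (t ℓ) := by
  rw [← Finset.mul_prod_erase univ (fun ℓ => Ffun j z w ℓ (t ℓ)) (mem_univ j)]
  congr 1
  · simp [Ffun]
  · rw [← Finset.erase_eq]
    refine Finset.prod_congr rfl fun ℓ hl => ?_
    simp [Ffun, (Finset.mem_erase.mp hl).1]

/-! ### untied Nevanlinna condition -/

lemma NU_base (hN : NevanCond n μ) {j k : Fin n} (hjk : j ≠ k) (z w : Fin n → ℂ)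
    (hz : ∀ l, 0 < (z l).im) (hw : ∀ l, 0 < (w l).im)
    (hzw : ∀ ℓ, ℓ ≠ j → ℓ ≠ k → w ℓ = z ℓ) : Jint μ j k z w = 0 := by
  set y : Fin n → ℂ := Function.update z k (w k) with hy
  have hypos : ∀ l, 0 < (y l).im := by
    intro l
    rcases eq_or_ne l k with rfl | h
    · rw [hy, Function.update_self]; exact hw l
    · rw [hy, Function.update_of_ne h]; exact hz l
  have hyj : y j = z j := Function.update_of_ne hjk _ _
  have hyk : y k = w k := Function.update_self _ _ _
  have hyo : ∀ ℓ, ℓ ≠ j → ℓ ≠ k → y ℓ = z ℓ ∧ y ℓ = w ℓ := fun ℓ h1 h2 =>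
    ⟨by rw [hy, Function.update_of_ne h2], by
      rw [hy, Function.update_of_ne h2]; exact (hzw ℓ h1 h2).symm⟩
  rcases lt_or_gt_of_ne hjk with hlt | hgt
  · have h0 : (∫ t : Fin n → ℝ, sq (y j) (t j) * sq ((starRingEnd ℂ) (y k)) (t k)
        * ∏ ℓ ∈ univ \ {j, k}, cd (y ℓ) ((starRingEnd ℂ) (y ℓ)) (t ℓ) ∂μ) = 0 :=
      hN y hypos j k hlt
    rw [Jint, Tint]
    rw [show (fun t : Fin n → ℝ => ∏ ℓ, Gfun j k z w ℓ (t ℓ))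
        = fun t => sq (y j) (t j) * sq ((starRingEnd ℂ) (y k)) (t k)
          * ∏ ℓ ∈ univ \ {j, k}, cd (y ℓ) ((starRingEnd ℂ) (y ℓ)) (t ℓ) from funext fun t => by
      rw [prod_Gfun j k hjk]
      rw [hyj, hyk]
      congr 1
      refine Finset.prod_congr rfl fun ℓ hl => ?_
      have h1 : ℓ ≠ j ∧ ℓ ≠ k := by
        have := Finset.mem_sdiff.mp hl
        simp only [Finset.mem_insert, Finset.mem_singleton] at this
        tauto
      rw [(hyo ℓ h1.1 h1.2).1, hzw ℓ h1.1 h1.2]]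
    exact h0
  · -- k < j : conjugate the Nevanlinna condition
    have h0 : (∫ t : Fin n → ℝ, sq (y k) (t k) * sq ((starRingEnd ℂ) (y j)) (t j)
        * ∏ ℓ ∈ univ \ {k, j}, cd (y ℓ) ((starRingEnd ℂ) (y ℓ)) (t ℓ) ∂μ) = 0 :=
      hN y hypos k j hgt
    have h1 : (∫ t : Fin n → ℝ, (starRingEnd ℂ) (sq (y k) (t k)
        * sq ((starRingEnd ℂ) (y j)) (t j)
        * ∏ ℓ ∈ univ \ {k, j}, cd (y ℓ) ((starRingEnd ℂ) (y ℓ)) (t ℓ)) ∂μ) = 0 := by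
      rw [integral_conj, h0, map_zero]
    set m := (univ \ ({j, k} : Finset (Fin n))).card with hm
    have hset : (univ \ ({k, j} : Finset (Fin n))) = univ \ {j, k} := by
      rw [Finset.pair_comm]
    have hptw : ∀ t : Fin n → ℝ, (starRingEnd ℂ) (sq (y k) (t k)
        * sq ((starRingEnd ℂ) (y j)) (t j)
        * ∏ ℓ ∈ univ \ {k, j}, cd (y ℓ) ((starRingEnd ℂ) (y ℓ)) (t ℓ))
        = (-1 : ℂ) ^ m • ∏ ℓ, Gfun j k z w ℓ (t ℓ) := by
      intro t
      have hprod : ∀ ℓ ∈ univ \ ({k, j} : Finset (Fin n)),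
          (starRingEnd ℂ) (cd (y ℓ) ((starRingEnd ℂ) (y ℓ)) (t ℓ))
            = (-1 : ℂ) * cd (y ℓ) ((starRingEnd ℂ) (y ℓ)) (t ℓ) := fun ℓ _ => by
        rw [conj_cd, Complex.conj_conj, cd_anti]
        ring
      have hfac : ∀ ℓ ∈ univ \ ({j, k} : Finset (Fin n)),
          cd (y ℓ) ((starRingEnd ℂ) (y ℓ)) (t ℓ)
            = cd (z ℓ) ((starRingEnd ℂ) (w ℓ)) (t ℓ) := by
        intro ℓ hl
        have h1 : ℓ ≠ j ∧ ℓ ≠ k := by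
          have := Finset.mem_sdiff.mp hl
          simp only [Finset.mem_insert, Finset.mem_singleton] at this
          tauto
        rw [(hyo ℓ h1.1 h1.2).1, hzw ℓ h1.1 h1.2]
      rw [map_mul, map_mul, conj_sq, conj_sq, Complex.conj_conj, map_prod]
      rw [Finset.prod_congr rfl hprod, Finset.prod_mul_distrib, Finset.prod_const]
      rw [prod_Gfun j k hjk, hyj, hyk, smul_eq_mul, hset]
      rw [Finset.prod_congr rfl hfac, ← hm]
      ring
    rw [show (fun t : Fin n → ℝ => (starRingEnd ℂ) (sq (y k) (t k)
        * sq ((starRingEnd ℂ) (y j)) (t j)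
        * ∏ ℓ ∈ univ \ {k, j}, cd (y ℓ) ((starRingEnd ℂ) (y ℓ)) (t ℓ)))
        = fun t => (-1 : ℂ) ^ m • ∏ ℓ, Gfun j k z w ℓ (t ℓ) from funext hptw] at h1
    rw [integral_smul] at h1
    have hne : ((-1 : ℂ) ^ m) ≠ 0 := pow_ne_zero _ (by norm_num)
    have := (smul_eq_zero.mp h1).resolve_left hne
    exact this

theorem NU (hg : GrowthCond n μ) (hN : NevanCond n μ) {j k : Fin n} (hjk : j ≠ k)
    (z w : Fin n → ℂ) (hz : ∀ l, 0 < (z l).im) (hw : ∀ l, 0 < (w l).im) :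
    Jint μ j k z w = 0 := by
  suffices H : ∀ S : Finset (Fin n), ∀ z w : Fin n → ℂ, (∀ l, 0 < (z l).im) →
      (∀ l, 0 < (w l).im) → (∀ ℓ, ℓ ≠ j → ℓ ≠ k → ℓ ∉ S → w ℓ = z ℓ) →
      Jint μ j k z w = 0 by
    exact H univ z w hz hw (fun ℓ _ _ hmem => absurd (mem_univ ℓ) hmem)
  intro S
  induction S using Finset.induction_on with
  | empty =>
    intro z w hz hw hzw
    exact NU_base hN hjk z w hz hw (fun ℓ h1 h2 => hzw ℓ h1 h2 (notMem_empty ℓ))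
  | @insert m S hmS ih =>
    intro z w hz hw hzw
    by_cases hmj : m = j
    · exact ih z w hz hw (fun ℓ h1 h2 h3 => hzw ℓ h1 h2
        (fun hmem => (Finset.mem_insert.mp hmem).elim (fun he => h1 (he.trans hmj)) h3))
    · by_cases hmk : m = k
      · exact ih z w hz hw (fun ℓ h1 h2 h3 => hzw ℓ h1 h2
          (fun hmem => (Finset.mem_insert.mp hmem).elim (fun he => h2 (he.trans hmk)) h3))
      · -- analytic untying step in coordinate m
        set G₀ := Gfun j k z w with hG₀
        have hAdmG : ∀ ℓ, ℓ ≠ m → Adm (G₀ ℓ) := fun ℓ _ => adm_Gfun hz hw ℓ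
        have hmI : (-Complex.I).im ≠ 0 := by simp
        have hGupdate : ∀ ζ ω : ℂ,
            Gfun j k (Function.update z m ζ) (Function.update w m ((starRingEnd ℂ) ω))
              = Function.update G₀ m (cd ζ ω) := by
          intro ζ ω
          funext ℓ
          rcases eq_or_ne ℓ m with rfl | e
          · rw [Function.update_self]
            simp only [Gfun, if_neg hmj, if_neg hmk, Function.update_self, Complex.conj_conj]
          · rw [Function.update_of_ne e]
            simp only [Gfun, hG₀]
            rcases eq_or_ne ℓ j with rfl | ej
            · rw [if_pos rfl, if_pos rfl, Function.update_of_ne (Ne.symm hmj)]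
            · rw [if_neg ej, if_neg ej]
              rcases eq_or_ne ℓ k with rfl | ek
              · rw [if_pos rfl, if_pos rfl, Function.update_of_ne (Ne.symm hmk)]
              · rw [if_neg ek, if_neg ek, Function.update_of_ne e, Function.update_of_ne e]
        set u : ℂ → ℂ := fun ζ => Tint μ (Function.update G₀ m (cd ζ (-Complex.I))) with hu_def
        have hsplit : ∀ ζ ω : ℂ, ζ.im ≠ 0 → ω.im ≠ 0 →
            Tint μ (Function.update G₀ m (cd ζ ω)) = u ζ - u ω := by
          intro ζ ω hζ hω
          have hco : (cd ζ ω : ℝ → ℂ)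
              = fun s => cd ζ (-Complex.I) s + cd (-Complex.I) ω s :=
            funext fun s => cd_cocycle ζ (-Complex.I) ω s
          rw [hco, T_update_add hg G₀ m hAdmG (adm_cd hζ hmI) (adm_cd hmI hω)]
          have hneg : (cd (-Complex.I) ω : ℝ → ℂ)
              = fun s => (-1 : ℂ) * cd ω (-Complex.I) s := funext fun s => by
            rw [cd_anti]; ring
          rw [hneg, T_update_smul]
          simp only [hu_def]
          ring
        have hu : ∀ ζ : ℂ, 0 < ζ.im →
            HasDerivAt u (Tint μ (Function.update G₀ m (sq ζ))) ζ :=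
          fun ζ h => T_hasDerivAt hg G₀ m hAdmG (-Complex.I) hmI ζ (ne_of_gt h)
        have hr : ∀ ω : ℂ, ω.im < 0 →
            HasDerivAt u (Tint μ (Function.update G₀ m (sq ω))) ω :=
          fun ω h => T_hasDerivAt hg G₀ m hAdmG (-Complex.I) hmI ω (ne_of_lt h)
        have htied : ∀ ζ : ℂ, 0 < ζ.im → u ζ = u ((starRingEnd ℂ) ζ) := by
          intro ζ hζ
          have hz' : ∀ l, 0 < ((Function.update z m ζ) l).im := by
            intro l
            rcases eq_or_ne l m with rfl | e
            · rw [Function.update_self]; exact hζ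
            · rw [Function.update_of_ne e]; exact hz l
          have hw' : ∀ l, 0 < ((Function.update w m
              ((starRingEnd ℂ) ((starRingEnd ℂ) ζ))) l).im := by
            intro l
            rcases eq_or_ne l m with rfl | e
            · rw [Function.update_self, Complex.conj_conj]; exact hζ
            · rw [Function.update_of_ne e]; exact hw l
          have hagree : ∀ ℓ, ℓ ≠ j → ℓ ≠ k → ℓ ∉ S →
              (Function.update w m ((starRingEnd ℂ) ((starRingEnd ℂ) ζ))) ℓ
                = (Function.update z m ζ) ℓ := by
            intro ℓ h1 h2 h3
            rcases eq_or_ne ℓ m with rfl | e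
            · rw [Function.update_self, Function.update_self, Complex.conj_conj]
            · rw [Function.update_of_ne e, Function.update_of_ne e]
              exact hzw ℓ h1 h2 (fun hmem => (Finset.mem_insert.mp hmem).elim e h3)
          have h0 := ih (Function.update z m ζ)
            (Function.update w m ((starRingEnd ℂ) ((starRingEnd ℂ) ζ))) hz' hw' hagree
          rw [Jint, hGupdate ζ ((starRingEnd ℂ) ζ)] at h0
          have := hsplit ζ ((starRingEnd ℂ) ζ) (ne_of_gt hζ)
            (by rw [Complex.conj_im]; exact neg_ne_zero.mpr (ne_of_gt hζ))
          rw [this] at h0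
          exact sub_eq_zero.mp h0
        have hderiv0 := deriv_zero_of_conj_eq hu hr htied
        have hS : Convex ℝ {c : ℂ | 0 < c.im} := convex_halfSpace_im_gt 0
        have hSop : IsOpen {c : ℂ | 0 < c.im} := isOpen_lt continuous_const Complex.continuous_im
        have huconst : ∀ ζ₁ ζ₂ : ℂ, 0 < ζ₁.im → 0 < ζ₂.im → u ζ₁ = u ζ₂ := by
          intro ζ₁ ζ₂ h1 h2
          exact const_of_deriv_zero hS hSop
            (fun ζ hζ => by
              have hd := hu ζ hζ
              rwa [hderiv0 ζ hζ] at hd) h1 h2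
        have hzm : 0 < (z m).im := hz m
        have hwm : 0 < (w m).im := hw m
        have hfin : Jint μ j k z w = u (z m) - u ((starRingEnd ℂ) (w m)) := by
          have h1 : Gfun j k z w
              = Function.update G₀ m (cd (z m) ((starRingEnd ℂ) (w m))) := by
            have h2 := hGupdate (z m) ((starRingEnd ℂ) (w m))
            rw [Complex.conj_conj, Function.update_eq_self, Function.update_eq_self] at h2
            exact h2
          rw [Jint, h1]
          exact hsplit (z m) ((starRingEnd ℂ) (w m)) (ne_of_gt hzm)
            (by rw [Complex.conj_im]; exact neg_ne_zero.mpr (ne_of_gt hwm))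
        rw [hfin, ← htied (w m) hwm, huconst (z m) (w m) hzm hwm]
        ring

lemma FU_step (hg : GrowthCond n μ) (hN : NevanCond n μ) (j m : Fin n) (z w : Fin n → ℂ)
    (hz : ∀ l, 0 < (z l).im) (hw : ∀ l, 0 < (w l).im) (c : ℂ) (hc : 0 < c.im) :
    Fint μ j z (Function.update w m c) = Fint μ j z w := by
  rcases eq_or_ne m j with rfl | hmj
  · -- the j-th entry of w is irrelevant
    rw [Fint, Fint]
    congr 1
    funext ℓ
    simp only [Ffun]
    rcases eq_or_ne ℓ m with rfl | e
    · rw [if_pos rfl, if_pos rfl]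
    · rw [if_neg e, if_neg e, Function.update_of_ne e]
  · set F₀ := Ffun j z w with hF₀
    have hAdmF : ∀ ℓ, ℓ ≠ m → Adm (F₀ ℓ) := fun ℓ _ => adm_Ffun hz hw ℓ
    have hzm : (z m).im ≠ 0 := ne_of_gt (hz m)
    have hFupdate : ∀ ω : ℂ, Ffun j z (Function.update w m ((starRingEnd ℂ) ω))
        = Function.update F₀ m (cd (z m) ω) := by
      intro ω
      funext ℓ
      rcases eq_or_ne ℓ m with rfl | e
      · rw [Function.update_self]
        simp only [Ffun, if_neg hmj, Function.update_self, Complex.conj_conj]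
      · rw [Function.update_of_ne e]
        simp only [Ffun, hF₀]
        rcases eq_or_ne ℓ j with rfl | ej
        · rw [if_pos rfl, if_pos rfl]
        · rw [if_neg ej, if_neg ej, Function.update_of_ne e]
    set W : ℂ → ℂ := fun ω => Tint μ (Function.update F₀ m (cd ω (z m))) with hW_def
    have hWd : ∀ ω : ℂ, ω.im < 0 →
        HasDerivAt W (Tint μ (Function.update F₀ m (sq ω))) ω :=
      fun ω h => T_hasDerivAt hg F₀ m hAdmF (z m) hzm ω (ne_of_lt h)
    have hWd0 : ∀ ω : ℂ, ω.im < 0 → Tint μ (Function.update F₀ m (sq ω)) = 0 := by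
      intro ω hω
      have hw' : ∀ l, 0 < ((Function.update w m ((starRingEnd ℂ) ω)) l).im := by
        intro l
        rcases eq_or_ne l m with rfl | e
        · rw [Function.update_self, Complex.conj_im]
          linarith
        · rw [Function.update_of_ne e]; exact hw l
      have hfun : Function.update F₀ m (sq ω)
          = Gfun j m z (Function.update w m ((starRingEnd ℂ) ω)) := by
        funext ℓ
        rcases eq_or_ne ℓ m with rfl | e
        · rw [Function.update_self]
          simp only [Gfun, if_neg hmj, eq_self_iff_true, if_true, Function.update_self,
            Complex.conj_conj]
        · rw [Function.update_of_ne e]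
          simp only [Gfun, Ffun, hF₀]
          rcases eq_or_ne ℓ j with rfl | ej
          · rw [if_pos rfl, if_pos rfl]
          · rw [if_neg ej, if_neg ej, if_neg e, Function.update_of_ne e]
      rw [hfun]
      exact NU hg hN (Ne.symm hmj) z (Function.update w m ((starRingEnd ℂ) ω)) hz hw'
    have hWconst : W ((starRingEnd ℂ) c) = W ((starRingEnd ℂ) (w m)) := by
      refine const_of_deriv_zero (convex_halfSpace_im_lt 0)
        (isOpen_lt Complex.continuous_im continuous_const)
        (fun ω hω => ?_) ?_ ?_
      · have hd := hWd ω hω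
        rwa [hWd0 ω hω] at hd
      · show ((starRingEnd ℂ) c).im < 0
        rw [Complex.conj_im]
        linarith
      · show ((starRingEnd ℂ) (w m)).im < 0
        rw [Complex.conj_im]
        have := hw m
        linarith
    have hVW : ∀ ω : ℂ, Tint μ (Function.update F₀ m (cd (z m) ω)) = (-1 : ℂ) * W ω := by
      intro ω
      have hneg : (cd (z m) ω : ℝ → ℂ) = fun s => (-1 : ℂ) * cd ω (z m) s :=
        funext fun s => by rw [cd_anti]; ring
      rw [hneg, T_update_smul, hW_def]
    have hend1 : Fint μ j z (Function.update w m c) = (-1 : ℂ) * W ((starRingEnd ℂ) c) := by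
      have h2 := hFupdate ((starRingEnd ℂ) c)
      rw [Complex.conj_conj] at h2
      rw [Fint, h2, hVW]
    have hend2 : Fint μ j z w = (-1 : ℂ) * W ((starRingEnd ℂ) (w m)) := by
      have h2 := hFupdate ((starRingEnd ℂ) (w m))
      rw [Complex.conj_conj, Function.update_eq_self] at h2
      rw [Fint, h2, hVW]
    rw [hend1, hend2, hWconst]

theorem Fint_const (hg : GrowthCond n μ) (hN : NevanCond n μ) (j : Fin n)
    (z w w' : Fin n → ℂ) (hz : ∀ l, 0 < (z l).im) (hw : ∀ l, 0 < (w l).im)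
    (hw' : ∀ l, 0 < (w' l).im) : Fint μ j z w = Fint μ j z w' := by
  suffices H : ∀ S : Finset (Fin n), Fint μ j z (S.piecewise w' w) = Fint μ j z w by
    have h1 := H univ
    rw [Finset.piecewise_univ] at h1
    exact h1.symm
  intro S
  induction S using Finset.induction_on with
  | empty => rw [Finset.piecewise_empty]
  | @insert m S hmS ih =>
    rw [Finset.piecewise_insert]
    have hpos : ∀ l, 0 < ((S.piecewise w' w) l).im := by
      intro l
      by_cases hl : l ∈ S
      · rw [Finset.piecewise_eq_of_mem _ _ _ hl]; exact hw' l
      · rw [Finset.piecewise_eq_of_notMem _ _ _ hl]; exact hw l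
    rw [FU_step hg hN j m z (S.piecewise w' w) hz hpos (w' m) (hw' m)]
    exact ih

lemma Fint_eq_A (j : Fin n) (z : Fin n → ℂ) :
    Fint μ j z z = ∫ t : Fin n → ℝ, (((t j : ℂ) - z j) ^ 2)⁻¹ *
      ∏ ℓ ∈ univ \ {j},
        (((t ℓ : ℂ) - z ℓ)⁻¹ - ((t ℓ : ℂ) - (starRingEnd ℂ) (z ℓ))⁻¹) ∂μ := by
  rw [Fint, Tint]
  congr 1
  funext t
  rw [prod_Ffun]
  rfl

lemma Fint_eq_B (j : Fin n) (z : Fin n → ℂ) :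
    Fint μ j z (fun _ => Complex.I) = ∫ t : Fin n → ℝ, (((t j : ℂ) - z j) ^ 2)⁻¹ *
      ∏ ℓ ∈ univ \ {j},
        (((t ℓ : ℂ) - z ℓ)⁻¹ - ((t ℓ : ℂ) + Complex.I)⁻¹) ∂μ := by
  rw [Fint, Tint]
  congr 1
  funext t
  rw [prod_Ffun]
  congr 1
  refine Finset.prod_congr rfl fun ℓ _ => ?_
  simp only [cd, Complex.conj_I, sub_neg_eq_add]


end NevanAux

open NevanAux in
/-- Corollary 3.11: refinement of condition (3.3) for Nevanlinna measures. -/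
theorem condition_c_iff_refined (n : ℕ) (hn : 1 ≤ n) (μ : Measure (Fin n → ℝ))
    (hμ : IsNevanlinnaMeasure n μ) :
    (∀ j : Fin n, ∀ z : Fin n → ℂ, (∀ l, 0 < (z l).im) →
        ∫ t : Fin n → ℝ, (((t j : ℂ) - z j) ^ 2)⁻¹ *
          ∏ ℓ ∈ univ \ {j},
            (((t ℓ : ℂ) - z ℓ)⁻¹ - ((t ℓ : ℂ) - (starRingEnd ℂ) (z ℓ))⁻¹) ∂μ = 0) ↔
      (∀ j : Fin n, ∀ z : Fin n → ℂ, (∀ l, 0 < (z l).im) →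
        ∫ t : Fin n → ℝ, (((t j : ℂ) - z j) ^ 2)⁻¹ *
          ∏ ℓ ∈ univ \ {j},
            (((t ℓ : ℂ) - z ℓ)⁻¹ - ((t ℓ : ℂ) + I)⁻¹) ∂μ = 0) := by
  obtain ⟨hg, hN⟩ := hμ
  have hIpos : ∀ _l : Fin n, 0 < ((fun _ : Fin n => Complex.I) _l).im := fun _ => by simp
  constructor
  · intro hA j z hz
    have h1 : Fint μ j z (fun _ => Complex.I) = Fint μ j z z :=
      Fint_const hg hN j z _ z hz hIpos hz
    rw [← Fint_eq_B, h1, Fint_eq_A]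
    exact hA j z hz
  · intro hB j z hz
    have h1 : Fint μ j z z = Fint μ j z (fun _ => Complex.I) :=
      Fint_const hg hN j z z _ hz hz hIpos
    rw [← Fint_eq_A, h1, Fint_eq_B]
    exact hB j z hz
end
end
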